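/- arXiv:0710.5404 — 5 statements merged into one kernel-verified Lean document; each statement's English description precedes it below -/
import Mathlib

section
/- Let c > 0 and d ≥ 1 be given. Let (u,v) and (ū,v̄) be two bounded classical solutions of the system ∂u/∂t = Δu + (2c(1−u)+1)v − u, ∂v/∂t = Δv + (c(u−v)−2)v on [0,∞)×ℝ^d, both taking values in ℛ = {(u,v) ∈ ℝ² : 0 ≤ v ≤ u ≤ 1}. If u(0,x) ≤ ū(0,x) and v(0,x) ≤ v̄(0,x) for all x ∈ ℝ^d, then u(t,x) ≤ ū(t,x) and v(t,x) ≤ v̄(t,x) for all t ≥ 0 and all x ∈ ℝ^d. -/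
open Set

/-- Pointwise time derivative of `u : ℝ → (Fin d → ℝ) → ℝ`. -/
noncomputable def timeDeriv {d : ℕ} (u : ℝ → (Fin d → ℝ) → ℝ) (t : ℝ) (x : Fin d → ℝ) : ℝ :=
  deriv (fun τ => u τ x) t

/-- Pointwise spatial Laplacian `Δu = ∑ i ∂²u/∂xᵢ²`. -/
noncomputable def lapl {d : ℕ} (u : ℝ → (Fin d → ℝ) → ℝ) (t : ℝ) (x : Fin d → ℝ) : ℝ :=
  ∑ i : Fin d, iteratedDeriv 2 (fun s => u t (Function.update x i s)) (x i)

/-- A bounded classical solution on `[0,∞) × ℝ^d` of the system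
`∂u/∂t = Δu + (2c(1−u)+1)v − u`, `∂v/∂t = Δv + (c(u−v)−2)v`:
both functions are bounded, continuous on `[0,∞) × ℝ^d`, C¹ in `t` and C² in `x`
for `t > 0`, and satisfy the system pointwise for `t > 0`. -/
structure IsBddClassicalSol (d : ℕ) (c : ℝ) (u v : ℝ → (Fin d → ℝ) → ℝ) : Prop where
  bdd_u : ∃ C, ∀ t x, |u t x| ≤ C
  bdd_v : ∃ C, ∀ t x, |v t x| ≤ C
  cont_u : ContinuousOn (fun p : ℝ × (Fin d → ℝ) => u p.1 p.2) (Ici 0 ×ˢ univ)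
  cont_v : ContinuousOn (fun p : ℝ × (Fin d → ℝ) => v p.1 p.2) (Ici 0 ×ˢ univ)
  t_reg_u : ∀ x, ContDiffOn ℝ 1 (fun τ => u τ x) (Ioi 0)
  t_reg_v : ∀ x, ContDiffOn ℝ 1 (fun τ => v τ x) (Ioi 0)
  x_reg_u : ∀ t, 0 < t → ContDiff ℝ 2 (fun x => u t x)
  x_reg_v : ∀ t, 0 < t → ContDiff ℝ 2 (fun x => v t x)
  eq_u : ∀ t, 0 < t → ∀ x,
    timeDeriv u t x = lapl u t x + (2 * c * (1 - u t x) + 1) * v t x - u t x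
  eq_v : ∀ t, 0 < t → ∀ x,
    timeDeriv v t x = lapl v t x + (c * (u t x - v t x) - 2) * v t x

/-!
Perturb the differences by a growing quadratic barrier: for `ε > 0` let
`W = ū - u + ε e^{Kt} (1 + |x|²)` and `Z = v̄ - v + ε e^{Kt} (1 + |x|²)` with `K = 2d + 2c + 1`.
Both are positive at `t = 0`, and, because the solutions take values in `ℛ`, they can only be
nonpositive on a compact set of `x`. If one of them ever vanished, at the first such time `t₀`
and a point `x₀` where it does, the time derivative would be `≤ 0` and the Laplacian `≥ 0`.
The system is cooperative (the `u`-equation is increasing in `v` and the `v`-equation in `u`),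
so the reaction terms lose at most `2c` times the barrier, while `∂ₜ - Δ` of the barrier
is at least `(K - 2d)` times it; the choice of `K` makes this contradictory. Letting `ε → 0`
gives the comparison.
-/

open Filter Topology

theorem deriv_nonpos_of_eventually_le_left {f : ℝ → ℝ} {a : ℝ} (hf : DifferentiableAt ℝ f a)
    (h : ∀ᶠ t in 𝓝[<] a, f a ≤ f t) : deriv f a ≤ 0 := by
  have hslope : Tendsto (slope f a) (𝓝[<] a) (𝓝 (deriv f a)) :=
    (hasDerivAt_iff_tendsto_slope.mp hf.hasDerivAt).mono_left
      (nhdsWithin_mono a fun t ht => ne_of_lt ht)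
  refine le_of_tendsto hslope ?_
  filter_upwards [h, self_mem_nhdsWithin] with t hle (hlt : t < a)
  rw [slope_def_field]
  exact div_nonpos_of_nonneg_of_nonpos (by linarith) (by linarith)

theorem IsLocalMin.deriv_deriv_nonneg {g : ℝ → ℝ} {a : ℝ} (hmin : IsLocalMin g a)
    (hc : ContinuousAt g a) : 0 ≤ deriv (deriv g) a := by
  by_contra! hneg
  have hmax : IsLocalMax g a := isLocalMax_of_deriv_deriv_neg hneg hmin.deriv_eq_zero hc
  have hconst : g =ᶠ[𝓝 a] fun _ => g a :=
    (hmin.and hmax).mono fun t ht => le_antisymm ht.2 ht.1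
  have hflat : deriv g =ᶠ[𝓝 a] fun _ => 0 := hconst.deriv.trans (by simp)
  simp [hflat.deriv_eq] at hneg

theorem lapl_nonneg_of_isMinOn {d : ℕ} {w : ℝ → (Fin d → ℝ) → ℝ} {t : ℝ} {x : Fin d → ℝ}
    (hw : Continuous (w t)) (hmin : IsMinOn (w t) univ x) : 0 ≤ lapl w t x := by
  refine Finset.sum_nonneg fun i _ => ?_
  rw [iteratedDeriv_succ, iteratedDeriv_one]
  refine IsLocalMin.deriv_deriv_nonneg (Filter.Eventually.of_forall fun s => ?_) ?_
  · simpa using hmin (mem_univ (Function.update x i s))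
  · exact (hw.comp (continuous_const.update i continuous_id)).continuousAt

noncomputable def penalty (d : ℕ) (x : Fin d → ℝ) : ℝ := 1 + ∑ i, x i ^ 2

theorem continuous_penalty {d : ℕ} : Continuous (penalty d) := by
  unfold penalty; fun_prop

theorem one_le_penalty {d : ℕ} (x : Fin d → ℝ) : 1 ≤ penalty d x :=
  le_add_of_nonneg_right (Finset.sum_nonneg fun i _ => sq_nonneg (x i))

theorem norm_le_penalty {d : ℕ} (x : Fin d → ℝ) : ‖x‖ ≤ penalty d x := by
  refine (pi_norm_le_iff_of_nonneg (zero_le_one.trans (one_le_penalty x))).mpr fun i => ?_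
  have hsq : x i ^ 2 ≤ ∑ j, x j ^ 2 :=
    Finset.single_le_sum (f := fun j => x j ^ 2) (fun j _ => sq_nonneg (x j)) (Finset.mem_univ i)
  rw [Real.norm_eq_abs, penalty]
  nlinarith [sq_abs (x i), sq_nonneg (|x i| - 1)]

theorem penalty_update {d : ℕ} (x : Fin d → ℝ) (i : Fin d) (s : ℝ) :
    penalty d (Function.update x i s) = penalty d x - x i ^ 2 + s ^ 2 := by
  have hrest : ∑ j ∈ Finset.univ.erase i, Function.update x i s j ^ 2 =
      ∑ j ∈ Finset.univ.erase i, x j ^ 2 :=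
    Finset.sum_congr rfl fun j hj => by rw [Function.update_of_ne (Finset.ne_of_mem_erase hj)]
  simp only [penalty, ← Finset.add_sum_erase _ _ (Finset.mem_univ i), hrest,
    Function.update_self]
  ring

theorem iteratedDeriv_two_penalty_update {d : ℕ} (a : ℝ) (x : Fin d → ℝ) (i : Fin d) (s : ℝ) :
    iteratedDeriv 2 (fun r => a * penalty d (Function.update x i r)) s = 2 * a := by
  simp only [penalty_update, mul_add]
  rw [iteratedDeriv_const_add two_pos]
  simp [iteratedDeriv_const_mul_field, Nat.descFactorial_self, mul_comm]

noncomputable def barrier {d : ℕ} (K ε : ℝ) (f g : ℝ → (Fin d → ℝ) → ℝ) (t : ℝ)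
    (x : Fin d → ℝ) : ℝ :=
  f t x - g t x + ε * Real.exp (K * t) * penalty d x

section Barrier

variable {d : ℕ} {K ε : ℝ} {f g : ℝ → (Fin d → ℝ) → ℝ} {t : ℝ} {x : Fin d → ℝ}

theorem lapl_barrier (hf : ContDiff ℝ 2 (f t)) (hg : ContDiff ℝ 2 (g t)) :
    lapl (barrier K ε f g) t x = lapl f t x - lapl g t x + 2 * d * (ε * Real.exp (K * t)) := by
  have hsection : ∀ i : Fin d,
      iteratedDeriv 2 (fun s => barrier K ε f g t (Function.update x i s)) (x i) =
        iteratedDeriv 2 (fun s => f t (Function.update x i s)) (x i) -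
          iteratedDeriv 2 (fun s => g t (Function.update x i s)) (x i) +
            2 * (ε * Real.exp (K * t)) := by
    intro i
    have hfi : ContDiffAt ℝ 2 (fun s => f t (Function.update x i s)) (x i) :=
      (hf.comp (contDiff_update 2 x i)).contDiffAt
    have hgi : ContDiffAt ℝ 2 (fun s => g t (Function.update x i s)) (x i) :=
      (hg.comp (contDiff_update 2 x i)).contDiffAt
    have hpi : ContDiffAt ℝ 2
        (fun s => ε * Real.exp (K * t) * penalty d (Function.update x i s)) (x i) := by
      simp only [penalty_update]; fun_prop
    simp only [barrier]
    rw [iteratedDeriv_fun_add (hfi.sub hgi) hpi, iteratedDeriv_fun_sub hfi hgi,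
      iteratedDeriv_two_penalty_update]
  simp only [lapl, hsection, Finset.sum_add_distrib, Finset.sum_sub_distrib, Finset.sum_const,
    Finset.card_univ, Fintype.card_fin, nsmul_eq_mul]
  ring

theorem hasDerivAt_barrier (hf : DifferentiableAt ℝ (fun τ => f τ x) t)
    (hg : DifferentiableAt ℝ (fun τ => g τ x) t) :
    HasDerivAt (fun τ => barrier K ε f g τ x)
      (timeDeriv f t x - timeDeriv g t x + K * (ε * Real.exp (K * t) * penalty d x)) t := by
  have hexp : HasDerivAt (fun τ => ε * Real.exp (K * τ) * penalty d x)
      (K * (ε * Real.exp (K * t) * penalty d x)) t := by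
    have hlin : HasDerivAt (fun τ => K * τ) K t := by simpa using (hasDerivAt_id t).const_mul K
    exact ((hlin.exp.const_mul ε).mul_const (penalty d x)).congr_deriv (by ring)
  exact (hf.hasDerivAt.sub hg.hasDerivAt).add hexp

theorem barrier_zero_pos (hε : 0 < ε) (hfg : g 0 x ≤ f 0 x) : 0 < barrier K ε f g 0 x := by
  have := one_le_penalty x
  simp only [barrier, mul_zero, Real.exp_zero, mul_one]
  nlinarith

theorem norm_le_of_barrier_nonpos (hK : 0 ≤ K) (hε : 0 < ε) (ht : 0 ≤ t)
    (hgf : g t x - f t x ≤ 1) (hW : barrier K ε f g t x ≤ 0) : ‖x‖ ≤ 1 / ε := by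
  have hexp : 1 ≤ Real.exp (K * t) := Real.one_le_exp (mul_nonneg hK ht)
  have hQ := one_le_penalty x
  have hεQ : ε * penalty d x ≤ 1 := by unfold barrier at hW; nlinarith
  rw [le_div_iff₀ hε]
  nlinarith [norm_le_penalty x]

theorem continuousOn_barrier
    (hf : ContinuousOn (fun p : ℝ × (Fin d → ℝ) => f p.1 p.2) (Ici 0 ×ˢ univ))
    (hg : ContinuousOn (fun p : ℝ × (Fin d → ℝ) => g p.1 p.2) (Ici 0 ×ˢ univ)) :
    ContinuousOn (fun p : ℝ × (Fin d → ℝ) => barrier K ε f g p.1 p.2) (Ici 0 ×ˢ univ) := by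
  have hQ := continuous_penalty (d := d)
  unfold barrier
  exact (hf.sub hg).add (by fun_prop)

theorem le_of_forall_barrier_pos (h : ∀ ε > 0, 0 < barrier K ε f g t x) : g t x ≤ f t x := by
  have hlim : Tendsto (fun ε => barrier K ε f g t x) (𝓝[>] 0) (𝓝 (f t x - g t x)) := by
    refine tendsto_nhdsWithin_of_tendsto_nhds ?_
    simpa [barrier] using ((continuous_id.mul continuous_const).mul continuous_const).tendsto
      (0 : ℝ) |>.const_add (f t x - g t x)
  have := ge_of_tendsto hlim (eventually_nhdsWithin_of_forall fun ε hε => (h ε hε).le)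
  linarith

theorem timeDeriv_sub_lapl_le_of_barrier_touch (ht : 0 < t)
    (hf : DifferentiableAt ℝ (fun τ => f τ x) t) (hg : DifferentiableAt ℝ (fun τ => g τ x) t)
    (hf₂ : ContDiff ℝ 2 (f t)) (hg₂ : ContDiff ℝ 2 (g t))
    (hzero : barrier K ε f g t x = 0) (hmin : ∀ y, 0 ≤ barrier K ε f g t y)
    (hbefore : ∀ τ ∈ Ioo 0 t, 0 ≤ barrier K ε f g τ x) :
    timeDeriv f t x - timeDeriv g t x - (lapl f t x - lapl g t x) ≤
      ε * Real.exp (K * t) * (2 * d - K * penalty d x) := by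
  have hT := hasDerivAt_barrier (K := K) (ε := ε) hf hg
  have hdt : deriv (fun τ => barrier K ε f g τ x) t ≤ 0 :=
    deriv_nonpos_of_eventually_le_left hT.differentiableAt
      (eventually_of_mem (Ioo_mem_nhdsLT ht) fun τ hτ => hzero ▸ hbefore τ hτ)
  have hcont : Continuous (barrier K ε f g t) :=
    (hf₂.continuous.sub hg₂.continuous).add (continuous_const.mul continuous_penalty)
  have hdx : 0 ≤ lapl (barrier K ε f g) t x :=
    lapl_nonneg_of_isMinOn hcont fun y _ => hzero ▸ hmin y
  rw [hT.deriv] at hdt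
  rw [lapl_barrier hf₂ hg₂] at hdx
  linarith

end Barrier

theorem ContinuousOn.exists_first_zero {E : Type*} [TopologicalSpace E] {G : ℝ × E → ℝ}
    (hG : ContinuousOn G (Ici 0 ×ˢ univ)) {K : Set E} (hK : IsCompact K)
    (hsupp : ∀ t ≥ 0, ∀ x, G (t, x) ≤ 0 → x ∈ K) (hinit : ∀ x, 0 < G (0, x))
    {t₁ : ℝ} (ht₁ : 0 ≤ t₁) {x₁ : E} (hx₁ : G (t₁, x₁) ≤ 0) :
    ∃ t₀ > 0, ∃ x₀, G (t₀, x₀) = 0 ∧ (∀ t ∈ Ico 0 t₀, ∀ x, 0 < G (t, x)) ∧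
      ∀ x, 0 ≤ G (t₀, x) := by
  set T := (Icc 0 t₁ ×ˢ K) ∩ (Ici 0 ×ˢ univ ∩ G ⁻¹' Iic 0)
  have hT : IsCompact T := (isCompact_Icc.prod hK).inter_right
    (hG.preimage_isClosed_of_isClosed (isClosed_Ici.prod isClosed_univ) isClosed_Iic)
  have hx₁T : (t₁, x₁) ∈ T :=
    ⟨⟨⟨ht₁, le_rfl⟩, hsupp t₁ ht₁ x₁ hx₁⟩, ⟨ht₁, mem_univ _⟩, hx₁⟩
  obtain ⟨⟨t₀, x₀⟩, ⟨⟨⟨ht₀, ht₀t₁⟩, -⟩, -, hx₀⟩, hfirst⟩ :=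
    hT.exists_isMinOn ⟨_, hx₁T⟩ continuous_fst.continuousOn
  have hbefore : ∀ t ∈ Ico 0 t₀, ∀ x, 0 < G (t, x) := by
    intro t ht x
    by_contra! hle
    have hmem : (t, x) ∈ T :=
      ⟨⟨⟨ht.1, ht.2.le.trans ht₀t₁⟩, hsupp t ht.1 x hle⟩, ⟨ht.1, mem_univ _⟩, hle⟩
    exact (hfirst hmem).not_gt ht.2
  have ht₀pos : 0 < t₀ := by
    refine ht₀.lt_of_ne fun h => ?_
    subst h
    exact (hinit x₀).not_ge hx₀
  have hat : ∀ x, 0 ≤ G (t₀, x) := by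
    intro x
    have hcont : ContinuousWithinAt (fun t => G (t, x)) (Ico 0 t₀) t₀ :=
      (hG (t₀, x) ⟨ht₀, mem_univ _⟩).comp (f := fun t => (t, x)) (x := t₀)
        (Continuous.prodMk_left x).continuousWithinAt fun t ht => ⟨ht.1, mem_univ _⟩
    have : (𝓝[Ico 0 t₀] t₀).NeBot := mem_closure_iff_nhdsWithin_neBot.mp
      (by rw [closure_Ico ht₀pos.ne]; exact right_mem_Icc.mpr ht₀)
    exact ge_of_tendsto hcont (eventually_nhdsWithin_of_forall fun t ht => (hbefore t ht x).le)
  exact ⟨t₀, ht₀pos, x₀, le_antisymm hx₀ (hat x₀), hbefore, hat⟩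

theorem reaction_u_sub_ge {c u v ub vb P : ℝ} (hc : 0 ≤ c) (hP : 0 ≤ P)
    (hu : ub - u + P = 0) (hv : 0 ≤ vb - v + P) (hub₀ : 0 ≤ ub) (hub₁ : ub ≤ 1) (hv₀ : 0 ≤ v) :
    -(2 * c * P) ≤ ((2 * c * (1 - ub) + 1) * vb - ub) - ((2 * c * (1 - u) + 1) * v - u) := by
  obtain rfl : u = ub + P := by linarith
  nlinarith [mul_nonneg (by nlinarith : 0 ≤ 2 * c * (1 - ub) + 1) hv,
    mul_nonneg (mul_nonneg hc hub₀) hP, mul_nonneg (mul_nonneg hc hP) hv₀]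

theorem reaction_v_sub_ge {c u v ub vb P : ℝ} (hc : 0 ≤ c) (hP : 0 ≤ P)
    (hv : vb - v + P = 0) (hu : 0 ≤ ub - u + P) (hvb₀ : 0 ≤ vb) (hvb₁ : vb ≤ 1) (hu₁ : u ≤ 1) :
    -(2 * c * P) ≤ (c * (ub - vb) - 2) * vb - (c * (u - v) - 2) * v := by
  obtain rfl : v = vb + P := by linarith
  nlinarith [mul_nonneg (mul_nonneg hc hvb₀) hu, mul_nonneg (mul_nonneg hc hP) (sub_nonneg.2 hvb₁),
    mul_nonneg (mul_nonneg hc hP) (sub_nonneg.2 hu₁), mul_nonneg (mul_nonneg hc hvb₀) hP,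
    mul_nonneg hc (sq_nonneg P)]

theorem barrier_gap {d : ℕ} {c E Q : ℝ} (hE : 0 < E) (hQ : 1 ≤ Q) :
    E * (2 * d - (2 * d + 2 * c + 1) * Q) < -(2 * c * (E * Q)) := by
  have hgrowth : 0 < 2 * d * (Q - 1) + Q := by
    have := mul_nonneg (Nat.cast_nonneg (α := ℝ) d) (sub_nonneg.2 hQ)
    linarith
  nlinarith [mul_pos hE hgrowth]

namespace IsBddClassicalSol

variable {d : ℕ} {c : ℝ} {u v : ℝ → (Fin d → ℝ) → ℝ} {t : ℝ}

theorem differentiableAt_u (h : IsBddClassicalSol d c u v) (ht : 0 < t) (x : Fin d → ℝ) :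
    DifferentiableAt ℝ (fun τ => u τ x) t :=
  ((h.t_reg_u x).differentiableOn one_ne_zero).differentiableAt (isOpen_Ioi.mem_nhds ht)

theorem differentiableAt_v (h : IsBddClassicalSol d c u v) (ht : 0 < t) (x : Fin d → ℝ) :
    DifferentiableAt ℝ (fun τ => v τ x) t :=
  ((h.t_reg_v x).differentiableOn one_ne_zero).differentiableAt (isOpen_Ioi.mem_nhds ht)

end IsBddClassicalSol

section Comparison

variable {d : ℕ} {c : ℝ} {u v ubar vbar : ℝ → (Fin d → ℝ) → ℝ} {ε t : ℝ} {x : Fin d → ℝ}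

theorem false_of_barrier_touch_u (hc : 0 < c) (hε : 0 < ε)
    (hsol : IsBddClassicalSol d c u v) (hsolbar : IsBddClassicalSol d c ubar vbar) (ht : 0 < t)
    (hv₀ : 0 ≤ v t x) (hub₀ : 0 ≤ ubar t x) (hub₁ : ubar t x ≤ 1)
    (hzero : barrier (2 * d + 2 * c + 1) ε ubar u t x = 0)
    (hmin : ∀ y, 0 ≤ barrier (2 * d + 2 * c + 1) ε ubar u t y)
    (hbefore : ∀ τ ∈ Ioo 0 t, 0 ≤ barrier (2 * d + 2 * c + 1) ε ubar u τ x)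
    (hZ : 0 ≤ barrier (2 * d + 2 * c + 1) ε vbar v t x) : False := by
  have htouch := timeDeriv_sub_lapl_le_of_barrier_touch ht
    (hsolbar.differentiableAt_u ht x) (hsol.differentiableAt_u ht x)
    (hsolbar.x_reg_u t ht) (hsol.x_reg_u t ht) hzero hmin hbefore
  rw [hsolbar.eq_u t ht x, hsol.eq_u t ht x] at htouch
  have hreact := reaction_u_sub_ge hc.le (by have := one_le_penalty x; positivity)
    hzero hZ hub₀ hub₁ hv₀
  have hgap := barrier_gap (d := d) (c := c) (E := ε * Real.exp ((2 * d + 2 * c + 1) * t))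
    (by positivity) (one_le_penalty x)
  linarith

theorem false_of_barrier_touch_v (hc : 0 < c) (hε : 0 < ε)
    (hsol : IsBddClassicalSol d c u v) (hsolbar : IsBddClassicalSol d c ubar vbar) (ht : 0 < t)
    (hvb₀ : 0 ≤ vbar t x) (hvb₁ : vbar t x ≤ 1) (hu₁ : u t x ≤ 1)
    (hzero : barrier (2 * d + 2 * c + 1) ε vbar v t x = 0)
    (hmin : ∀ y, 0 ≤ barrier (2 * d + 2 * c + 1) ε vbar v t y)
    (hbefore : ∀ τ ∈ Ioo 0 t, 0 ≤ barrier (2 * d + 2 * c + 1) ε vbar v τ x)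
    (hW : 0 ≤ barrier (2 * d + 2 * c + 1) ε ubar u t x) : False := by
  have htouch := timeDeriv_sub_lapl_le_of_barrier_touch ht
    (hsolbar.differentiableAt_v ht x) (hsol.differentiableAt_v ht x)
    (hsolbar.x_reg_v t ht) (hsol.x_reg_v t ht) hzero hmin hbefore
  rw [hsolbar.eq_v t ht x, hsol.eq_v t ht x] at htouch
  have hreact := reaction_v_sub_ge hc.le (by have := one_le_penalty x; positivity)
    hzero hW hvb₀ hvb₁ hu₁
  have hgap := barrier_gap (d := d) (c := c) (E := ε * Real.exp ((2 * d + 2 * c + 1) * t))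
    (by positivity) (one_le_penalty x)
  linarith

theorem barrier_pos (hc : 0 < c)
    (hsol : IsBddClassicalSol d c u v) (hsolbar : IsBddClassicalSol d c ubar vbar)
    (hR : ∀ t, 0 ≤ t → ∀ x, 0 ≤ v t x ∧ v t x ≤ u t x ∧ u t x ≤ 1)
    (hRbar : ∀ t, 0 ≤ t → ∀ x, 0 ≤ vbar t x ∧ vbar t x ≤ ubar t x ∧ ubar t x ≤ 1)
    (hinit : ∀ x, u 0 x ≤ ubar 0 x ∧ v 0 x ≤ vbar 0 x) (hε : 0 < ε) (ht : 0 ≤ t) :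
    0 < barrier (2 * d + 2 * c + 1) ε ubar u t x ∧
      0 < barrier (2 * d + 2 * c + 1) ε vbar v t x := by
  set K : ℝ := 2 * d + 2 * c + 1
  by_contra! hneg
  set G : ℝ × (Fin d → ℝ) → ℝ :=
    fun p => min (barrier K ε ubar u p.1 p.2) (barrier K ε vbar v p.1 p.2)
  have hGcont : ContinuousOn G (Ici 0 ×ˢ univ) :=
    (continuousOn_barrier hsolbar.cont_u hsol.cont_u).inf
      (continuousOn_barrier hsolbar.cont_v hsol.cont_v)
  have hGsupp : ∀ t ≥ 0, ∀ x, G (t, x) ≤ 0 → x ∈ Metric.closedBall 0 (1 / ε) := by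
    intro t ht x hx
    rw [mem_closedBall_zero_iff]
    obtain ⟨hv₀, hvu, hu₁⟩ := hR t ht x
    obtain ⟨hvb₀, hvbub, hub₁⟩ := hRbar t ht x
    rcases min_le_iff.mp hx with h | h
    · exact norm_le_of_barrier_nonpos (by positivity) hε ht (by linarith) h
    · exact norm_le_of_barrier_nonpos (by positivity) hε ht (by linarith) h
  have hG₀ : ∀ x, 0 < G (0, x) := fun x =>
    lt_min (barrier_zero_pos hε (hinit x).1) (barrier_zero_pos hε (hinit x).2)
  have hGx : G (t, x) ≤ 0 := by
    by_cases h : 0 < barrier K ε ubar u t x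
    · exact min_le_of_right_le (hneg h)
    · exact min_le_of_left_le (not_lt.mp h)
  obtain ⟨t₀, ht₀, x₀, hzero, hbefore, hat⟩ :=
    hGcont.exists_first_zero (isCompact_closedBall _ _) hGsupp hG₀ ht hGx
  have hmin : ∀ y, 0 ≤ barrier K ε ubar u t₀ y ∧ 0 ≤ barrier K ε vbar v t₀ y :=
    fun y => le_min_iff.mp (hat y)
  have hbefore' : ∀ τ ∈ Ioo 0 t₀,
      0 ≤ barrier K ε ubar u τ x₀ ∧ 0 ≤ barrier K ε vbar v τ x₀ :=
    fun τ hτ => le_min_iff.mp (hbefore τ ⟨hτ.1.le, hτ.2⟩ x₀).le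
  obtain ⟨hv₀, -, hu₁⟩ := hR t₀ ht₀.le x₀
  obtain ⟨hvb₀, hvbub, hub₁⟩ := hRbar t₀ ht₀.le x₀
  rcases min_choice (barrier K ε ubar u t₀ x₀) (barrier K ε vbar v t₀ x₀) with h | h
  · exact false_of_barrier_touch_u hc hε hsol hsolbar ht₀ hv₀ (hvb₀.trans hvbub) hub₁
      (h ▸ hzero) (fun y => (hmin y).1) (fun τ hτ => (hbefore' τ hτ).1) (hmin x₀).2
  · exact false_of_barrier_touch_v hc hε hsol hsolbar ht₀ hvb₀ (hvbub.trans hub₁) hu₁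
      (h ▸ hzero) (fun y => (hmin y).2) (fun τ hτ => (hbefore' τ hτ).2) (hmin x₀).1

end Comparison

theorem stmt0_general (d : ℕ) (c : ℝ) (hc : 0 < c)
    (u v ubar vbar : ℝ → (Fin d → ℝ) → ℝ)
    (hsol : IsBddClassicalSol d c u v) (hsolbar : IsBddClassicalSol d c ubar vbar)
    (hR : ∀ t, 0 ≤ t → ∀ x, 0 ≤ v t x ∧ v t x ≤ u t x ∧ u t x ≤ 1)
    (hRbar : ∀ t, 0 ≤ t → ∀ x, 0 ≤ vbar t x ∧ vbar t x ≤ ubar t x ∧ ubar t x ≤ 1)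
    (hinit : ∀ x, u 0 x ≤ ubar 0 x ∧ v 0 x ≤ vbar 0 x) :
    ∀ t, 0 ≤ t → ∀ x, u t x ≤ ubar t x ∧ v t x ≤ vbar t x := by
  intro t ht x
  have hpos := fun ε (hε : 0 < ε) => barrier_pos (x := x) hc hsol hsolbar hR hRbar hinit hε ht
  exact ⟨le_of_forall_barrier_pos fun ε hε => (hpos ε hε).1,
    le_of_forall_barrier_pos fun ε hε => (hpos ε hε).2⟩

/-- Monotonicity (in initial data) of the PDE system (15) for solutions taking
values in `ℛ = {(u,v) : 0 ≤ v ≤ u ≤ 1}`. -/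
theorem stmt0 (d : ℕ) (hd : 1 ≤ d) (c : ℝ) (hc : 0 < c)
    (u v ubar vbar : ℝ → (Fin d → ℝ) → ℝ)
    (hsol : IsBddClassicalSol d c u v) (hsolbar : IsBddClassicalSol d c ubar vbar)
    (hR : ∀ t, 0 ≤ t → ∀ x, 0 ≤ v t x ∧ v t x ≤ u t x ∧ u t x ≤ 1)
    (hRbar : ∀ t, 0 ≤ t → ∀ x, 0 ≤ vbar t x ∧ vbar t x ≤ ubar t x ∧ ubar t x ≤ 1)
    (hinit : ∀ x, u 0 x ≤ ubar 0 x ∧ v 0 x ≤ vbar 0 x) :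
    ∀ t, 0 ≤ t → ∀ x, u t x ≤ ubar t x ∧ v t x ≤ vbar t x :=
  stmt0_general d c hc u v ubar vbar hsol hsolbar hR hRbar hinit
end

section
/- Let 0 < l < L. Then for every s > 0 and every x ∈ ℝ, (e^{sΔ}f₀)(x) ≥ f₀(x) − 2s/l². -/
open Set MeasureTheory

/-- The heat semigroup on ℝ:
`(e^{sΔ}g)(x) = (4πs)^{−1/2} ∫ e^{−y²/(4s)} g(x−y) dy` for `s > 0`
(extended by the identity for `s ≤ 0`). -/
noncomputable def heatSG (s : ℝ) (g : ℝ → ℝ) (x : ℝ) : ℝ :=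
  if s ≤ 0 then g x
  else (4 * Real.pi * s) ^ (-(1 : ℝ) / 2) * ∫ y : ℝ, Real.exp (-(y ^ 2) / (4 * s)) * g (x - y)

/-- The smoothed step function `h` with transition width `2l`. -/
noncomputable def hFun (l : ℝ) (x : ℝ) : ℝ :=
  if x < -l then 0
  else if x ≤ 0 then (1 / 2) * ((x + l) / l) ^ 2
  else if x ≤ l then 1 - (1 / 2) * ((l - x) / l) ^ 2
  else 1

/-- The smoothed indicator `f₀` of `[−L,L]` with transition regions of width `2l`:
`f₀ = 1` on `[−L+l, L−l]`, `f₀(x) = h(x+L)` on `[−L−l, −L+l]`,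
`f₀(x) = h(L−x)` on `[L−l, L+l]`, and `f₀ = 0` for `|x| ≥ L+l`. -/
noncomputable def f0 (l L : ℝ) (x : ℝ) : ℝ :=
  if x < -(L + l) then 0
  else if x < -L + l then hFun l (x + L)
  else if x ≤ L - l then 1
  else if x ≤ L + l then hFun l (L - x)
  else 0

/-!
Writing `ψ(y) = max(y, 0)²`, `h` is the second difference
`(ψ(x + l) - 2ψ(x) + ψ(x - l)) / (2l²)`, so it is `C¹` and `h'` is a tent of slope `±1/l²`.
Hence `f₀ = h(· + L) + h(L - ·) - 1` is `C¹` with `2/l²`-Lipschitz derivative, and so lies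
above each of its tangent parabolas `f₀(x) + f₀'(x)(z - x) - (z - x)²/l²`. For `s > 0`,
`e^{sΔ}` is the expectation against the centred Gaussian of variance `2s`: integrating the
tangent parabola at `x` kills the linear term and turns the quadratic one into `2s/l²`.
-/

open scoped NNReal
open ProbabilityTheory

theorem tangent_parabola_le_of_lipschitzWith_deriv {f f' : ℝ → ℝ} {K : ℝ≥0}
    (hf : ∀ x, HasDerivAt f (f' x) x) (hf' : LipschitzWith K f') (t u : ℝ) :
    f t + f' t * (u - t) - K / 2 * (u - t) ^ 2 ≤ f u := by
  -- `g' w` has the sign of `w - t` by the Lipschitz bound, so `g` is minimal at `t`.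
  set g : ℝ → ℝ := fun w => f w - f' t * w + K / 2 * (w - t) ^ 2
  have hg : ∀ w, HasDerivAt g (f' w - f' t + K * (w - t)) w := fun w => by
    have := ((hf w).fun_sub ((hasDerivAt_id' w).const_mul (f' t))).fun_add
      ((((hasDerivAt_id' w).sub_const t).fun_pow 2).const_mul (K / 2 : ℝ))
    exact this.congr_deriv (by norm_num; ring)
  have hlip : ∀ c, |f' c - f' t| ≤ K * |c - t| := fun c => by
    simpa [Real.dist_eq] using hf'.dist_le_mul c t
  suffices g t ≤ g u by simp only [g] at this; linarith
  rcases lt_trichotomy t u with htu | rfl | hut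
  · obtain ⟨c, ⟨htc, -⟩, hc⟩ := exists_hasDerivAt_eq_slope g _ htu
      (fun w _ => (hg w).continuousAt.continuousWithinAt) (fun w _ => hg w)
    have hD : 0 ≤ f' c - f' t + K * (c - t) := by
      have := hlip c
      rw [abs_of_pos (sub_pos.2 htc)] at this
      linarith [neg_abs_le (f' c - f' t)]
    rw [hc, div_nonneg_iff] at hD
    rcases hD with ⟨h, -⟩ | ⟨-, h⟩ <;> linarith
  · rfl
  · obtain ⟨c, ⟨-, hct⟩, hc⟩ := exists_hasDerivAt_eq_slope g _ hut
      (fun w _ => (hg w).continuousAt.continuousWithinAt) (fun w _ => hg w)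
    have hD : f' c - f' t + K * (c - t) ≤ 0 := by
      have := hlip c
      rw [abs_of_neg (sub_neg.2 hct)] at this
      linarith [le_abs_self (f' c - f' t)]
    rw [hc, div_nonpos_iff] at hD
    rcases hD with ⟨-, h⟩ | ⟨h, -⟩ <;> linarith

theorem hasDerivAt_max_zero_sq (x : ℝ) :
    HasDerivAt (fun y : ℝ => max y 0 ^ 2) (2 * max x 0) x := by
  rcases lt_trichotomy x 0 with hx | rfl | hx
  · refine (hasDerivAt_const x (0 : ℝ)).congr_of_eventuallyEq ?_ |>.congr_deriv (by simp [hx.le])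
    filter_upwards [eventually_lt_nhds hx] with y hy
    simp [hy.le]
  · have hIic : HasDerivWithinAt (fun y : ℝ => max y 0 ^ 2) 0 (Iic 0) 0 :=
      (hasDerivWithinAt_const 0 _ (0 : ℝ)).congr (fun y hy => by simp [mem_Iic.1 hy]) (by simp)
    have hIci : HasDerivWithinAt (fun y : ℝ => max y 0 ^ 2) 0 (Ici 0) 0 := by
      have := (hasDerivAt_pow 2 (0 : ℝ)).hasDerivWithinAt (s := Ici 0)
      exact (this.congr (fun y hy => by simp [mem_Ici.1 hy]) (by simp)).congr_deriv (by simp)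
    simpa [Iic_union_Ici, hasDerivWithinAt_univ] using hIic.union hIci
  · refine (hasDerivAt_pow 2 x).congr_of_eventuallyEq ?_ |>.congr_deriv (by simp [hx.le])
    filter_upwards [eventually_gt_nhds hx] with y hy
    simp [hy.le]

theorem max_add_sub_two_mul_max_add_max {l : ℝ} (hl : 0 ≤ l) (x : ℝ) :
    max (x + l) 0 - 2 * max x 0 + max (x - l) 0 = max (l - |x|) 0 := by
  rcases le_total 0 x with hx | hx
  · rw [abs_of_nonneg hx]
    rcases le_total x l with hxl | hxl
    · rw [max_eq_left (by linarith), max_eq_left hx, max_eq_right (by linarith),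
        max_eq_left (by linarith)]
      ring
    · rw [max_eq_left (by linarith), max_eq_left hx, max_eq_left (by linarith),
        max_eq_right (by linarith)]
      ring
  · rw [abs_of_nonpos hx]
    rcases le_total (-l) x with hxl | hxl
    · rw [max_eq_left (by linarith), max_eq_right hx, max_eq_right (by linarith),
        max_eq_left (by linarith)]
      ring
    · rw [max_eq_right (by linarith), max_eq_right hx, max_eq_right (by linarith),
        max_eq_right (by linarith)]
      ring

theorem integral_sq_gaussianReal_zero (v : ℝ≥0) : ∫ y, y ^ 2 ∂gaussianReal 0 v = v := by
  have := variance_eq_integral (X := id) (μ := gaussianReal 0 v) measurable_id.aemeasurable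
  simpa [variance_id_gaussianReal, integral_id_gaussianReal] using this.symm

theorem le_integral_gaussianReal_of_parabola_le {φ : ℝ → ℝ} {a p c : ℝ} {v : ℝ≥0}
    (hφ : Integrable φ (gaussianReal 0 v)) (h : ∀ y, a + p * y - c * y ^ 2 ≤ φ y) :
    a - c * v ≤ ∫ y, φ y ∂gaussianReal 0 v := by
  have hid : Integrable (fun y => y) (gaussianReal 0 v) :=
    memLp_one_iff_integrable.1 (memLp_id_gaussianReal 1)
  have hsq : Integrable (fun y => y ^ 2) (gaussianReal 0 v) :=
    (memLp_id_gaussianReal 2).integrable_sq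
  have hlin : Integrable (fun y => a + p * y) (gaussianReal 0 v) :=
    (integrable_const a).add (hid.const_mul p)
  calc a - c * v = ∫ y, (a + p * y - c * y ^ 2) ∂gaussianReal 0 v := by
        rw [integral_sub hlin (hsq.const_mul c),
          integral_add (integrable_const a) (hid.const_mul p), integral_const_mul,
          integral_const_mul, integral_id_gaussianReal, integral_sq_gaussianReal_zero]
        simp
    _ ≤ ∫ y, φ y ∂gaussianReal 0 v := integral_mono (hlin.sub (hsq.const_mul c)) hφ h

section hFun

variable {l : ℝ}

theorem hFun_of_le (hl : 0 < l) {x : ℝ} (hx : x ≤ -l) : hFun l x = 0 := by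
  unfold hFun
  split_ifs <;> first | rfl | linarith | simp [show x + l = 0 by linarith]

theorem hFun_of_ge (hl : 0 < l) {x : ℝ} (hx : l ≤ x) : hFun l x = 1 := by
  unfold hFun
  split_ifs <;> first | rfl | linarith | simp [show l - x = 0 by linarith]

theorem hFun_mem_Icc (hl : 0 < l) (x : ℝ) : hFun l x ∈ Icc 0 1 := by
  unfold hFun
  have hl2 : 0 < l ^ 2 := by positivity
  split_ifs
  · simp
  · have : ((x + l) / l) ^ 2 ≤ 1 := by rw [div_pow, div_le_one hl2]; nlinarith
    constructor <;> nlinarith [sq_nonneg ((x + l) / l)]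
  · have : ((l - x) / l) ^ 2 ≤ 1 := by rw [div_pow, div_le_one hl2]; nlinarith
    constructor <;> nlinarith [sq_nonneg ((l - x) / l)]
  · simp

theorem hFun_eq_secondDiff (hl : 0 < l) (x : ℝ) :
    hFun l x = (max (x + l) 0 ^ 2 - 2 * max x 0 ^ 2 + max (x - l) 0 ^ 2) / (2 * l ^ 2) := by
  unfold hFun
  split_ifs with h₁ h₂ h₃
  · rw [max_eq_right (by linarith), max_eq_right (by linarith), max_eq_right (by linarith)]
    simp
  · rw [max_eq_left (by linarith), max_eq_right h₂, max_eq_right (by linarith)]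
    field_simp; ring
  · rw [max_eq_left (by linarith), max_eq_left (by linarith), max_eq_right (by linarith)]
    field_simp; ring
  · rw [max_eq_left (by linarith), max_eq_left (by linarith), max_eq_left (by linarith)]
    field_simp; ring

noncomputable def hFunDeriv (l x : ℝ) : ℝ := max (l - |x|) 0 / l ^ 2

theorem hasDerivAt_hFun (hl : 0 < l) (x : ℝ) : HasDerivAt (hFun l) (hFunDeriv l x) x := by
  have hψ := ((((hasDerivAt_max_zero_sq (x + l)).comp_add_const x l).fun_sub
    ((hasDerivAt_max_zero_sq x).const_mul 2)).fun_add
    ((hasDerivAt_max_zero_sq (x - l)).comp_sub_const x l)).div_const (2 * l ^ 2)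
  rw [show hFun l = _ from funext (hFun_eq_secondDiff hl)]
  refine hψ.congr_deriv ?_
  rw [hFunDeriv, ← max_add_sub_two_mul_max_add_max hl.le]
  field_simp

theorem lipschitzWith_hFunDeriv (l : ℝ) : LipschitzWith (l ^ 2)⁻¹.toNNReal (hFunDeriv l) := by
  refine LipschitzWith.of_dist_le_mul fun a b => ?_
  rw [Real.dist_eq, Real.dist_eq, Real.coe_toNNReal _ (by positivity), hFunDeriv, hFunDeriv,
    ← sub_div, abs_div, abs_of_nonneg (sq_nonneg l), div_eq_inv_mul]
  refine mul_le_mul_of_nonneg_left ?_ (by positivity)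
  calc |max (l - |a|) 0 - max (l - |b|) 0| ≤ |(l - |a|) - (l - |b|)| :=
        abs_max_sub_max_le_abs _ _ _
    _ = |(|b| - |a|)| := by ring_nf
    _ ≤ |b - a| := abs_abs_sub_abs_le_abs_sub b a
    _ = |a - b| := abs_sub_comm b a

end hFun

section f0

variable {l L : ℝ}

theorem f0_eq_hFun_add_hFun (hl : 0 < l) (hlL : l < L) (x : ℝ) :
    f0 l L x = hFun l (x + L) + hFun l (L - x) - 1 := by
  unfold f0
  split_ifs
  · rw [hFun_of_le hl (by linarith), hFun_of_ge hl (by linarith)]; ring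
  · rw [hFun_of_ge hl (x := L - x) (by linarith)]; ring
  · rw [hFun_of_ge hl (by linarith), hFun_of_ge hl (by linarith)]; ring
  · rw [hFun_of_ge hl (x := x + L) (by linarith)]; ring
  · rw [hFun_of_ge hl (by linarith), hFun_of_le hl (by linarith)]; ring

theorem f0_mem_Icc (hl : 0 < l) (x : ℝ) : f0 l L x ∈ Icc 0 1 := by
  unfold f0
  split_ifs <;> first | exact hFun_mem_Icc hl _ | simp

noncomputable def f0Deriv (l L x : ℝ) : ℝ := hFunDeriv l (x + L) - hFunDeriv l (L - x)

theorem hasDerivAt_f0 (hl : 0 < l) (hlL : l < L) (x : ℝ) :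
    HasDerivAt (f0 l L) (f0Deriv l L x) x := by
  rw [show f0 l L = _ from funext (f0_eq_hFun_add_hFun hl hlL)]
  exact ((((hasDerivAt_hFun hl (x + L)).comp_add_const x L).fun_add
    ((hasDerivAt_hFun hl (L - x)).comp_const_sub L x)).sub_const 1).congr_deriv
      (sub_eq_add_neg _ _).symm

theorem continuous_f0 (hl : 0 < l) (hlL : l < L) : Continuous (f0 l L) :=
  continuous_iff_continuousAt.2 fun x => (hasDerivAt_f0 hl hlL x).continuousAt

theorem lipschitzWith_f0Deriv (l L : ℝ) :
    LipschitzWith (2 * (l ^ 2)⁻¹.toNNReal) (f0Deriv l L) := by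
  have h := lipschitzWith_hFunDeriv l
  have := (h.comp (isometry_add_right L).lipschitz).sub
    (h.comp (IsometryEquiv.subLeft L).isometry.lipschitz)
  rw [two_mul]
  simp only [mul_one, Function.comp_def, IsometryEquiv.subLeft_apply] at this
  exact this

theorem f0_tangent_parabola_le (hl : 0 < l) (hlL : l < L) (x z : ℝ) :
    f0 l L x + f0Deriv l L x * (z - x) - (z - x) ^ 2 / l ^ 2 ≤ f0 l L z := by
  have := tangent_parabola_le_of_lipschitzWith_deriv (hasDerivAt_f0 hl hlL)
    (lipschitzWith_f0Deriv l L) x z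
  rw [NNReal.coe_mul, Real.coe_toNNReal _ (by positivity)] at this
  convert this using 2
  push_cast
  ring

end f0

theorem heatSG_eq_integral_gaussianReal {s : ℝ} (hs : 0 < s) (g : ℝ → ℝ) (x : ℝ) :
    heatSG s g x = ∫ y, g (x - y) ∂gaussianReal 0 (2 * s).toNNReal := by
  have hv : (2 * s).toNNReal ≠ 0 := by simpa using hs
  have hc : (4 * Real.pi * s) ^ (-(1 : ℝ) / 2) = (√(2 * Real.pi * (2 * s)))⁻¹ := by
    rw [neg_div, Real.rpow_neg (by positivity), Real.sqrt_eq_rpow]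
    ring_nf
  rw [heatSG, if_neg hs.not_ge, integral_gaussianReal_eq_integral_smul hv, hc,
    ← integral_const_mul]
  congr 1 with y
  rw [gaussianPDFReal, Real.coe_toNNReal _ (by positivity), smul_eq_mul]
  ring_nf

/-- `(e^{sΔ}f₀)(x) ≥ f₀(x) − 2s/l²` for all `s > 0` and `x ∈ ℝ`. -/
theorem stmt3 (l L : ℝ) (hl : 0 < l) (hlL : l < L) (s : ℝ) (hs : 0 < s) (x : ℝ) :
    f0 l L x - 2 * s / l ^ 2 ≤ heatSG s (f0 l L) x := by
  have hint : Integrable (fun y => f0 l L (x - y)) (gaussianReal 0 (2 * s).toNNReal) := by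
    refine Integrable.of_bound
      ((continuous_f0 hl hlL).comp (continuous_sub_left x)).aestronglyMeasurable 1
      (ae_of_all _ fun y => ?_)
    obtain ⟨h₀, h₁⟩ := f0_mem_Icc (L := L) hl (x - y)
    exact abs_le.2 ⟨by linarith, h₁⟩
  have hparabola : ∀ y, f0 l L x + -f0Deriv l L x * y - 1 / l ^ 2 * y ^ 2 ≤ f0 l L (x - y) := by
    intro y
    have := f0_tangent_parabola_le hl hlL x (x - y)
    ring_nf at this ⊢
    linarith
  rw [heatSG_eq_integral_gaussianReal hs]
  convert le_integral_gaussianReal_of_parabola_le hint hparabola using 1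
  rw [Real.coe_toNNReal _ (by positivity)]
  ring
end

section
/- Let 0 < l < L and m > 0. There exist constants δ₁ > 0, δ₂ > 0 and s₁ > 0, depending on m, l, L but not on s, such that for every s ∈ (0, s₁], the function f̂ defined by f̂(x) = f₀(x) + ms for −L−l−s < x < L+l+s and f̂(x) = 0 otherwise satisfies f̂(x) ≥ (1+δ₂s) f_s(x) for all x ∈ ℝ, where f_s is defined using the constant δ₁. -/
open Set MeasureTheory

/-- `f_s`: the function `f₀` with its transition regions translated outward by `δ₁·s`,
i.e. `f_s = 1` on `[−L+l−δ₁s, L−l+δ₁s]`, `f_s(x) = h(x+L+δ₁s)` on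
`[−L−l−δ₁s, −L+l−δ₁s]`, `f_s(x) = h(L+δ₁s−x)` on `[L−l+δ₁s, L+l+δ₁s]`, `0` otherwise;
this is exactly `f₀` with `L` replaced by `L + δ₁s`. -/
noncomputable def fS (l L δ₁ s : ℝ) : ℝ → ℝ := f0 l (L + δ₁ * s)

lemma hFun_nonneg (l x : ℝ) (hl : 0 < l) : 0 ≤ hFun l x := by
  unfold hFun
  split_ifs with h1 h2 h3
  · norm_num
  · positivity
  · have ha : (l - x) / l ≤ 1 := by rw [div_le_one hl]; linarith
    have h0 : 0 ≤ (l - x) / l := by apply div_nonneg _ hl.le; linarith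
    nlinarith
  · norm_num

lemma hFun_le_one (l x : ℝ) (hl : 0 < l) : hFun l x ≤ 1 := by
  unfold hFun
  split_ifs with h1 h2 h3
  · norm_num
  · have ha : (x + l) / l ≤ 1 := by rw [div_le_one hl]; linarith
    have h0 : 0 ≤ (x + l) / l := by apply div_nonneg _ hl.le; linarith
    nlinarith
  · nlinarith [sq_nonneg ((l - x) / l)]
  · norm_num

lemma hFun_eq_zero (l x : ℝ) (hl : 0 < l) (hx : x ≤ -l) : hFun l x = 0 := by
  unfold hFun; split_ifs with h1 h2 h3
  · rfl
  · have : x = -l := le_antisymm hx (not_lt.mp h1)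
    rw [this]; ring_nf
  · linarith
  · linarith

lemma hFun_eq_one (l x : ℝ) (hl : 0 < l) (hx : l ≤ x) : hFun l x = 1 := by
  unfold hFun; split_ifs with h1 h2 h3
  · linarith
  · linarith
  · have : x = l := le_antisymm h3 hx
    rw [this]; ring_nf
  · rfl

lemma hFun_scale (l x : ℝ) (hl : 0 < l) : hFun l x = hFun 1 (x / l) := by
  have hl' : l ≠ 0 := ne_of_gt hl
  unfold hFun
  have h1 : (x / l < -(1:ℝ)) ↔ (x < -l) := by
    rw [div_lt_iff₀ hl]; constructor <;> intro h <;> linarith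
  have h2 : (x / l ≤ (0:ℝ)) ↔ (x ≤ 0) := by
    rw [div_le_iff₀ hl]; constructor <;> intro h <;> linarith
  have h3 : (x / l ≤ (1:ℝ)) ↔ (x ≤ l) := by
    rw [div_le_iff₀ hl]; constructor <;> intro h <;> linarith
  simp only [h1, h2, h3]
  split_ifs <;> first | rfl | (field_simp; try ring)

set_option maxHeartbeats 1000000 in
lemma hFun_lip_one (x y : ℝ) (hxy : x ≤ y) :
    hFun 1 y ≤ hFun 1 x + (y - x) := by
  unfold hFun
  split_ifs <;>
    nlinarith [sq_nonneg x, sq_nonneg y, sq_nonneg (x - y), sq_nonneg (x + 1),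
      sq_nonneg (1 - y), sq_nonneg (x + y)]

lemma hFun_lip (l x y : ℝ) (hl : 0 < l) (hxy : x ≤ y) :
    hFun l y ≤ hFun l x + (y - x) / l := by
  rw [hFun_scale l x hl, hFun_scale l y hl]
  have h := hFun_lip_one (x / l) (y / l) (by gcongr)
  have e : y / l - x / l = (y - x) / l := by ring
  linarith [h, e.symm.le, e.le]

lemma f0_eq_min (l L x : ℝ) (hl : 0 < l) (hlL : l < L) :
    f0 l L x = min (hFun l (x + L)) (hFun l (L - x)) := by
  unfold f0
  split_ifs with h1 h2 h3 h4
  · rw [hFun_eq_zero l (x + L) hl (by linarith),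
      min_eq_left (hFun_nonneg l (L - x) hl)]
  · rw [hFun_eq_one l (L - x) hl (by linarith),
      min_eq_left (hFun_le_one l (x + L) hl)]
  · rw [hFun_eq_one l (x + L) hl (by linarith),
      hFun_eq_one l (L - x) hl (by linarith)]; norm_num
  · rw [hFun_eq_one l (x + L) hl (by linarith),
      min_eq_right (hFun_le_one l (L - x) hl)]
  · rw [hFun_eq_zero l (L - x) hl (by linarith),
      min_eq_right (hFun_nonneg l (x + L) hl)]

lemma f0_nonneg (l L x : ℝ) (hl : 0 < l) (hlL : l < L) : 0 ≤ f0 l L x := by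
  rw [f0_eq_min l L x hl hlL]
  exact le_min (hFun_nonneg _ _ hl) (hFun_nonneg _ _ hl)

lemma f0_le_one (l L x : ℝ) (hl : 0 < l) (hlL : l < L) : f0 l L x ≤ 1 := by
  rw [f0_eq_min l L x hl hlL]
  exact (min_le_left _ _).trans (hFun_le_one _ _ hl)

lemma f0_eq_zero_out (l L x : ℝ) (hl : 0 < l) (hlL : l < L)
    (hx : x ≤ -(L + l) ∨ L + l ≤ x) : f0 l L x = 0 := by
  rw [f0_eq_min l L x hl hlL]
  rcases hx with hx | hx
  · rw [hFun_eq_zero l (x + L) hl (by linarith)]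
    exact min_eq_left (hFun_nonneg _ _ hl)
  · rw [hFun_eq_zero l (L - x) hl (by linarith)]
    exact min_eq_right (hFun_nonneg _ _ hl)

lemma f0_lip (l L t x : ℝ) (hl : 0 < l) (hlL : l < L) (ht : 0 ≤ t) :
    f0 l (L + t) x ≤ f0 l L x + t / l := by
  rw [f0_eq_min l L x hl hlL, f0_eq_min l (L + t) x hl (by linarith)]
  have h1 : hFun l (x + (L + t)) ≤ hFun l (x + L) + t / l := by
    have h := hFun_lip l (x + L) (x + (L + t)) hl (by linarith)
    have e : x + (L + t) - (x + L) = t := by ring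
    rw [e] at h; exact h
  have h2 : hFun l (L + t - x) ≤ hFun l (L - x) + t / l := by
    have h := hFun_lip l (L - x) (L + t - x) hl (by linarith)
    have e : L + t - x - (L - x) = t := by ring
    rw [e] at h; exact h
  rcases le_total (hFun l (x + L)) (hFun l (L - x)) with hc | hc
  · rw [min_eq_left hc]
    exact le_trans (min_le_left _ _) h1
  · rw [min_eq_right hc]
    exact le_trans (min_le_right _ _) h2

/-- Lemma 4.5: there exist `δ₁, δ₂, s₁ > 0` (independent of `s`) such that for all
`s ∈ (0, s₁]`, the function `f̂` (equal to `f₀ + ms` on `(−L−l−s, L+l+s)` and `0`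
elsewhere) satisfies `f̂(x) ≥ (1+δ₂s) f_s(x)` for all `x`. -/
theorem stmt5 (l L m : ℝ) (hl : 0 < l) (hlL : l < L) (hm : 0 < m) :
    ∃ δ₁ > (0 : ℝ), ∃ δ₂ > (0 : ℝ), ∃ s₁ > (0 : ℝ), ∀ s ∈ Ioc (0 : ℝ) s₁, ∀ x : ℝ,
      (1 + δ₂ * s) * fS l L δ₁ s x ≤
        (if -L - l - s < x ∧ x < L + l + s then f0 l L x + m * s else 0) := by
  set δ₁ : ℝ := min 1 (m * l / 2) with hδ₁
  have hδ₁pos : 0 < δ₁ := lt_min one_pos (by positivity)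
  have hδ₁le1 : δ₁ ≤ 1 := min_le_left _ _
  have hδ₁le2 : δ₁ ≤ m * l / 2 := min_le_right _ _
  refine ⟨δ₁, hδ₁pos, m / 2, by positivity, 1, one_pos, ?_⟩
  rintro s ⟨hs0, hs1⟩ x
  have hδs : 0 < δ₁ * s := by positivity
  have hδss : δ₁ * s ≤ s := by nlinarith
  have hlL' : l < L + δ₁ * s := by linarith
  split_ifs with hx
  · -- inside the interval
    have hfs_le : fS l L δ₁ s x ≤ f0 l L x + (δ₁ * s) / l :=
      f0_lip l L (δ₁ * s) x hl hlL hδs.le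
    have hfs1 : fS l L δ₁ s x ≤ 1 := f0_le_one l (L + δ₁ * s) x hl hlL'
    have hfs0 : 0 ≤ fS l L δ₁ s x := f0_nonneg l (L + δ₁ * s) x hl hlL'
    have hd : (δ₁ * s) / l ≤ (m / 2) * s := by
      rw [div_le_iff₀ hl]; nlinarith
    have hp : (m / 2 * s) * fS l L δ₁ s x ≤ m / 2 * s :=
      mul_le_of_le_one_right (by positivity) hfs1
    nlinarith [hfs_le, hd, hp]
  · -- outside the interval
    have h0 : fS l L δ₁ s x = 0 := by
      rcases not_and_or.mp hx with hx | hx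
      · exact f0_eq_zero_out l (L + δ₁ * s) x hl hlL'
          (Or.inl (by push_neg at hx; linarith))
      · exact f0_eq_zero_out l (L + δ₁ * s) x hl hlL'
          (Or.inr (by push_neg at hx; linarith))
    rw [h0, mul_zero]
end

section
/- Let c > 1 and let (u,v) : [0,∞) → ℝ² be differentiable with u'(t) = (2c(1−u(t))+1)v(t) − u(t) and v'(t) = (c(u(t)−v(t))−2)v(t) for all t ≥ 0, with initial condition (u(0),v(0)) = (1,1), and suppose (u(t),v(t)) ∈ ℛ for all t ≥ 0. Then for every d₂ ∈ (1−1/c, 1) there exists T > 0 such that v(t) < d₂ for all t ≥ T. -/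
open Set

/-- `ℛ = {(u,v) ∈ ℝ² : 0 ≤ v ≤ u ≤ 1}`. -/
def calR : Set (ℝ × ℝ) := {p | 0 ≤ p.2 ∧ p.2 ≤ p.1 ∧ p.1 ≤ 1}

/-- Proposition 4.8 (ODE part): if `c > 1` and `(u,v)` solves the ODE system
`u' = (2c(1−u)+1)v − u`, `v' = (c(u−v)−2)v` on `[0,∞)` with `(u(0),v(0)) = (1,1)`
and stays in `ℛ`, then for every `d₂ ∈ (1−1/c, 1)` there is `T > 0` with
`v(t) < d₂` for all `t ≥ T`. -/
theorem stmt13 (c : ℝ) (hc : 1 < c) (u v : ℝ → ℝ)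
    (hu : ∀ t ∈ Ici (0 : ℝ),
      HasDerivWithinAt u ((2 * c * (1 - u t) + 1) * v t - u t) (Ici 0) t)
    (hv : ∀ t ∈ Ici (0 : ℝ),
      HasDerivWithinAt v ((c * (u t - v t) - 2) * v t) (Ici 0) t)
    (hu0 : u 0 = 1) (hv0 : v 0 = 1)
    (hR : ∀ t, 0 ≤ t → (u t, v t) ∈ calR) :
    ∀ d₂ : ℝ, 1 - 1 / c < d₂ → d₂ < 1 → ∃ T > (0 : ℝ), ∀ t ≥ T, v t < d₂ := by
  intro d₂ hd₂₁ hd₂₂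
  have hc0 : (0 : ℝ) < c := lt_trans one_pos hc
  have hinvc : 1 / c < 1 := by
    rw [div_lt_one hc0]; exact hc
  have hd₂pos : 0 < d₂ := lt_trans (by linarith) hd₂₁
  have hcv : ContinuousOn v (Ici 0) := fun t ht => (hv t ht).continuousWithinAt
  -- derivative at interior points
  have hvderiv : ∀ t : ℝ, 0 < t → HasDerivAt v ((c * (u t - v t) - 2) * v t) t := by
    intro t ht
    exact (hv t (le_of_lt ht)).hasDerivAt (Ici_mem_nhds ht)
  -- key derivative bound: if `d₃ > 1 - 1/c` and `v t ≥ d₃`, then `v' t ≤ - v t`.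
  have hbound : ∀ d₃ : ℝ, 1 - 1 / c < d₃ → ∀ t : ℝ, 0 ≤ t → d₃ ≤ v t →
      (c * (u t - v t) - 2) * v t ≤ - v t := by
    intro d₃ hd₃ t ht hvt
    obtain ⟨h1, h2, h3⟩ := hR t ht
    have hcle : c * (1 - d₃) < 1 := by
      have : c * (1 - 1/c) < c * d₃ := by
        apply mul_lt_mul_of_pos_left hd₃ hc0
      have hc1 : c * (1 - 1/c) = c - 1 := by field_simp
      nlinarith
    nlinarith [mul_le_mul_of_nonneg_right (show c * (u t - v t) - 2 ≤ -1 by nlinarith) h1]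
  -- Step 1: there is t₀ ≥ 0 with v t₀ < d₂
  have step1 : ∃ t₀ : ℝ, 0 ≤ t₀ ∧ v t₀ < d₂ := by
    by_contra h
    push_neg at h
    have hall : ∀ t : ℝ, 0 ≤ t → d₂ ≤ v t := fun t ht => h t ht
    set T : ℝ := 2 / d₂ with hT
    have hTpos : 0 < T := by positivity
    -- w t = v t + d₂ * t is antitone on Icc 0 T
    have hanti : AntitoneOn (fun t => v t + d₂ * t) (Icc 0 T) := by
      apply antitoneOn_of_hasDerivWithinAt_nonpos (convex_Icc 0 T)
        (f' := fun t => (c * (u t - v t) - 2) * v t + d₂)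
      · exact fun t ht => ((hcv t ht.1).mono (fun x hx => hx.1)).add
          (continuousWithinAt_const.mul continuousWithinAt_id)
      · intro x hx
        rw [interior_Icc] at hx
        exact (((hvderiv x hx.1).add ((hasDerivAt_id x).const_mul d₂)).congr_deriv
          (by ring)).hasDerivWithinAt
      · intro x hx
        rw [interior_Icc] at hx
        have := hbound d₂ hd₂₁ x hx.1.le (hall x hx.1.le)
        have := hall x hx.1.le
        linarith
    have := hanti (left_mem_Icc.2 hTpos.le) (right_mem_Icc.2 hTpos.le) hTpos.le
    simp only [hv0] at this
    have hvT : d₂ ≤ v T := hall T hTpos.le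
    have : v T + d₂ * (2 / d₂) ≤ 1 + d₂ * 0 := this
    rw [mul_div_cancel₀ _ (ne_of_gt hd₂pos)] at this
    linarith
  obtain ⟨t₀, ht₀, hvt₀⟩ := step1
  refine ⟨t₀ + 1, by linarith, fun t ht => ?_⟩
  -- Step 2: v stays below d₂ after t₀
  by_contra hge
  push_neg at hge
  have htt₀ : t₀ ≤ t := by linarith
  -- the set of return times
  set A : Set ℝ := Ici t₀ ∩ v ⁻¹' (Ici d₂) with hA
  have hAne : A.Nonempty := ⟨t, htt₀, hge⟩
  have hAbdd : BddBelow A := ⟨t₀, fun x hx => hx.1⟩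
  have hAclosed : IsClosed A := by
    exact ContinuousOn.preimage_isClosed_of_isClosed
      (hcv.mono (fun x hx => le_trans ht₀ hx)) isClosed_Ici isClosed_Ici
  set s := sInf A with hs
  have hsA : s ∈ A := hAclosed.csInf_mem hAne hAbdd
  have hst₀ : t₀ ≤ s := hsA.1
  have hvs : d₂ ≤ v s := hsA.2
  have hslt : t₀ < s := lt_of_le_of_ne hst₀ (by intro h; rw [← h] at hvs; linarith)
  have hs0 : (0 : ℝ) < s := lt_of_le_of_lt ht₀ hslt
  -- pick d₃ strictly between 1 - 1/c and d₂
  set d₃ : ℝ := (1 - 1 / c + d₂) / 2 with hd₃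
  have hd₃₁ : 1 - 1 / c < d₃ := by rw [hd₃]; linarith
  have hd₃₂ : d₃ < d₂ := by rw [hd₃]; linarith
  -- continuity: v > d₃ near s within Ici 0
  have hcont : ContinuousWithinAt v (Ici 0) s := hcv s hs0.le
  have hev : ∀ᶠ x in nhdsWithin s (Ici 0), d₃ < v x :=
    Filter.Tendsto.eventually_lt continuousWithinAt_const hcont (lt_of_lt_of_le hd₃₂ hvs)
  rw [Filter.eventually_iff, Metric.mem_nhdsWithin_iff] at hev
  obtain ⟨δ, hδ0, hδ⟩ := hev
  set ε : ℝ := min (δ / 2) (s - t₀) with hε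
  have hε0 : 0 < ε := lt_min (by linarith) (by linarith)
  have hεδ : ε < δ := lt_of_le_of_lt (min_le_left _ _) (by linarith)
  have hεs : ε ≤ s - t₀ := min_le_right _ _
  -- v ≥ d₃ on [s - ε, s], hence antitone there
  have hmem : ∀ x ∈ Icc (s - ε) s, 0 ≤ x ∧ d₃ < v x := by
    intro x hx
    have hx0 : 0 ≤ x := le_trans (by linarith) hx.1
    refine ⟨hx0, hδ ⟨?_, hx0⟩⟩
    rw [Metric.mem_ball, Real.dist_eq, abs_lt]
    constructor <;> linarith [hx.1, hx.2]
  have hanti : AntitoneOn v (Icc (s - ε) s) := by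
    apply antitoneOn_of_hasDerivWithinAt_nonpos (convex_Icc _ _)
      (f' := fun t => (c * (u t - v t) - 2) * v t)
    · exact hcv.mono (fun x hx => (hmem x hx).1)
    · intro x hx
      rw [interior_Icc] at hx
      exact (hvderiv x (lt_of_le_of_lt (by linarith [hεs]) hx.1)).hasDerivWithinAt
    · intro x hx
      rw [interior_Icc] at hx
      obtain ⟨hx0, hx3⟩ := hmem x (Ioo_subset_Icc_self hx)
      have h1 := hbound d₃ hd₃₁ x hx0 hx3.le
      have h2 := (hR x hx0).1
      linarith
  have hle : v s ≤ v (s - ε) :=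
    hanti ⟨le_refl _, by linarith⟩ ⟨by linarith, le_refl _⟩ (by linarith)
  -- but s - ε < s = sInf A, so v (s - ε) < d₂
  have hnotA : s - ε ∉ A := fun hmem' => absurd (csInf_le hAbdd hmem') (by rw [← hs]; linarith)
  have : v (s - ε) < d₂ := by
    by_contra hge'
    refine hnotA ?_
    rw [hA]
    exact ⟨show t₀ ≤ s - ε by linarith, show d₂ ≤ v (s - ε) from le_of_not_gt hge'⟩
  linarith
end

section
/- For all sufficiently large c > 0 there exist constants 0 < D₁ < d₁ < d₂ < D₂ < 1, M > 0 and T > 0 such that for every bounded classical solution (u,v) of the system ∂u/∂t = Δu + (2c(1−u)+1)v − u, ∂v/∂t = Δv + (c(u−v)−2)v on [0,∞)×ℝ taking values in ℛ = {(u,v) ∈ ℝ² : 0 ≤ v ≤ u ≤ 1}: if v(0,x) ∈ (D₁, D₂) for all x ∈ [−M, M], then v(T,x) ∈ (d₁, d₂) for all x ∈ [−3M, 3M]. -/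
open Set

/-- A bounded classical solution on `[0,∞) × ℝ` of
`∂u/∂t = Δu + (2c(1−u)+1)v − u`, `∂v/∂t = Δv + (c(u−v)−2)v`:
both functions bounded, continuous on `[0,∞) × ℝ`, C¹ in `t` and C² in `x`
for `t > 0`, satisfying the system pointwise for `t > 0`. -/
structure IsBddSol1 (c : ℝ) (u v : ℝ → ℝ → ℝ) : Prop where
  bdd_u : ∃ C, ∀ t x, |u t x| ≤ C
  bdd_v : ∃ C, ∀ t x, |v t x| ≤ C
  cont_u : ContinuousOn (fun p : ℝ × ℝ => u p.1 p.2) (Ici 0 ×ˢ univ)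
  cont_v : ContinuousOn (fun p : ℝ × ℝ => v p.1 p.2) (Ici 0 ×ˢ univ)
  t_reg_u : ∀ x, ContDiffOn ℝ 1 (fun τ => u τ x) (Ioi 0)
  t_reg_v : ∀ x, ContDiffOn ℝ 1 (fun τ => v τ x) (Ioi 0)
  x_reg_u : ∀ t, 0 < t → ContDiff ℝ 2 (fun x => u t x)
  x_reg_v : ∀ t, 0 < t → ContDiff ℝ 2 (fun x => v t x)
  eq_u : ∀ t, 0 < t → ∀ x,
    deriv (fun τ => u τ x) t
      = iteratedDeriv 2 (fun y => u t y) x + (2 * c * (1 - u t x) + 1) * v t x - u t x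
  eq_v : ∀ t, 0 < t → ∀ x,
    deriv (fun τ => v τ x) t
      = iteratedDeriv 2 (fun y => v t y) x + (c * (u t x - v t x) - 2) * v t x

/-!
All comparisons are weak maximum principles for `∂ₜ - ∂ₓ² - L` on rectangles, or on the whole
line for functions bounded above (a `cosh` barrier pushes the lateral boundary to infinity).

From `v(0) > 1/1000` on `[-1, 1]`: since the reaction of `v` is at least `-2v`, `v` dominates the
heat flow of a Gaussian damped by `e^{-2t}`, hence `v ≥ r > 0` on `[6, 8] × [-8, 8]` for a fixed
`r`. Once `c r` is large, the term `2c(1 - u)v` lifts `u` above `1/8` on `[7, 8] × [-4, 4]`, and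
then `c(u - v)v` makes `v` grow at least like `r e^{c(t-7)/80} cos(πx/8)`; this reaches `1/10`
at a time `T ∈ (7, 8]`, and `cos(πx/8) > 3/10` for `|x| ≤ 3`. From above, `u ≤ 1` makes `v` a
subsolution of `∂ₜv = ∂ₓ²v + (c(1 - v) - 2)v`, so `v(t) ≤ 1 - (2/c)(1 - e^{-t}) < 1 - 1/c` for
`t ≥ 1`.
-/

open Filter Topology Real

lemma deriv_nonneg_of_isLocalMaxOn_Iic {f : ℝ → ℝ} {t : ℝ} (hd : DifferentiableAt ℝ f t)
    (hmax : IsLocalMaxOn f (Iic t) t) : 0 ≤ deriv f t := by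
  have hmem : (-1 : ℝ) ∈ posTangentConeAt (Iic t) t :=
    mem_posTangentConeAt_of_segment_subset (by
      rw [segment_eq_Icc']
      exact fun s hs => hs.2.trans (by simp))
  simpa using hmax.hasFDerivWithinAt_nonpos hd.hasDerivAt.hasFDerivAt.hasFDerivWithinAt hmem

lemma IsLocalMax.iteratedDeriv_two_nonpos {g : ℝ → ℝ} {x : ℝ} (hc : ContinuousAt g x)
    (hmax : IsLocalMax g x) : iteratedDeriv 2 g x ≤ 0 := by
  rw [iteratedDeriv_succ, iteratedDeriv_one]
  by_contra! hpos
  have hmin := isLocalMin_of_deriv_deriv_pos hpos hmax.deriv_eq_zero hc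
  have hconst : g =ᶠ[𝓝 x] fun _ => g x := by
    filter_upwards [hmax, hmin] with y h₁ h₂ using le_antisymm h₁ h₂
  have : deriv (deriv g) x = 0 := by
    rw [hconst.deriv.deriv_eq]
    simp
  exact hpos.ne' this

lemma iteratedDeriv_two_cosh (x : ℝ) : iteratedDeriv 2 cosh x = cosh x := by
  simp [iteratedDeriv_succ, Real.deriv_cosh, Real.deriv_sinh]

lemma tendsto_cosh_atTop : Tendsto cosh atTop atTop := by
  refine tendsto_atTop_mono (fun x => ?_) (tendsto_exp_atTop.atTop_div_const two_pos)
  rw [cosh_eq]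
  linarith [exp_pos (-x)]

lemma iteratedDeriv_two_cos_mul (k x : ℝ) :
    iteratedDeriv 2 (fun y => cos (k * y)) x = -(k ^ 2 * cos (k * x)) := by
  rw [iteratedDeriv_comp_const_mul contDiff_cos k]
  simp [iteratedDeriv_succ, Real.deriv_cos']

noncomputable def heatOp (z : ℝ → ℝ → ℝ) (t x : ℝ) : ℝ :=
  deriv (fun τ => z τ x) t - iteratedDeriv 2 (z t) x

lemma heatOp_mul_left {f : ℝ → ℝ} {z : ℝ → ℝ → ℝ} {t x f' : ℝ} (hf : HasDerivAt f f' t)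
    (hz : DifferentiableAt ℝ (fun τ => z τ x) t) :
    heatOp (fun t x => f t * z t x) t x = f t * heatOp z t x + f' * z t x := by
  rw [heatOp, heatOp, (hf.fun_mul hz.hasDerivAt).deriv, iteratedDeriv_const_mul_field]
  ring

lemma heatOp_of_time {f : ℝ → ℝ} (t x : ℝ) : heatOp (fun t _ => f t) t x = deriv f t := by
  simp [heatOp, iteratedDeriv_const]

lemma heatOp_of_space {g : ℝ → ℝ} (t x : ℝ) :
    heatOp (fun _ x => g x) t x = -iteratedDeriv 2 g x := by
  simp [heatOp]

lemma heatOp_separable {f g : ℝ → ℝ} {t f' : ℝ} (hf : HasDerivAt f f' t) (x : ℝ) :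
    heatOp (fun t x => f t * g x) t x = f' * g x - f t * iteratedDeriv 2 g x := by
  rw [heatOp_mul_left (z := fun _ x => g x) hf (differentiableAt_const _), heatOp_of_space]
  ring

structure IsHeatRegular (z : ℝ → ℝ → ℝ) (a b : ℝ) : Prop where
  continuousOn : ContinuousOn (fun p : ℝ × ℝ => z p.1 p.2) (Icc a b ×ˢ univ)
  differentiableAt : ∀ x, ∀ t ∈ Ioc a b, DifferentiableAt ℝ (fun τ => z τ x) t
  contDiff : ∀ t ∈ Ioc a b, ContDiff ℝ 2 (z t)

namespace IsHeatRegular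

variable {z w : ℝ → ℝ → ℝ} {a b R L : ℝ}

lemma sub (hz : IsHeatRegular z a b) (hw : IsHeatRegular w a b) :
    IsHeatRegular (fun t x => z t x - w t x) a b where
  continuousOn := hz.continuousOn.sub hw.continuousOn
  differentiableAt x t ht := (hz.differentiableAt x t ht).sub (hw.differentiableAt x t ht)
  contDiff t ht := (hz.contDiff t ht).sub (hw.contDiff t ht)

lemma mul_left {f : ℝ → ℝ} (hf : Differentiable ℝ f) (hz : IsHeatRegular z a b) :
    IsHeatRegular (fun t x => f t * z t x) a b where
  continuousOn := (hf.continuous.comp continuous_fst).continuousOn.mul hz.continuousOn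
  differentiableAt x t ht := (hf t).mul (hz.differentiableAt x t ht)
  contDiff t ht := contDiff_const.mul (hz.contDiff t ht)

lemma of_time {f : ℝ → ℝ} (hf : Differentiable ℝ f) : IsHeatRegular (fun t _ => f t) a b where
  continuousOn := (hf.continuous.comp continuous_fst).continuousOn
  differentiableAt _ t _ := hf t
  contDiff _ _ := contDiff_const

lemma of_space {g : ℝ → ℝ} (hg : ContDiff ℝ 2 g) : IsHeatRegular (fun _ x => g x) a b where
  continuousOn := (hg.continuous.comp continuous_snd).continuousOn
  differentiableAt _ _ _ := differentiableAt_const _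
  contDiff _ _ := hg

lemma heatOp_sub (hz : IsHeatRegular z a b) (hw : IsHeatRegular w a b) {t : ℝ} (ht : t ∈ Ioc a b)
    (x : ℝ) : heatOp (fun t x => z t x - w t x) t x = heatOp z t x - heatOp w t x := by
  have hzx := (hz.contDiff t ht).contDiffAt (x := x)
  have hwx := (hw.contDiff t ht).contDiffAt (x := x)
  simp only [heatOp, deriv_fun_sub (hz.differentiableAt x t ht) (hw.differentiableAt x t ht),
    iteratedDeriv_fun_sub hzx hwx]
  ring

lemma heatOp_nonneg_of_isMaxOn (hz : IsHeatRegular z a b) {t x : ℝ} (ht : t ∈ Ioc a b)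
    (hx : x ∈ Ioo (-R) R)
    (hmax : IsMaxOn (fun p : ℝ × ℝ => z p.1 p.2) (Icc a b ×ˢ Icc (-R) R) (t, x)) :
    0 ≤ heatOp z t x := by
  have htime : 0 ≤ deriv (fun τ => z τ x) t := by
    refine deriv_nonneg_of_isLocalMaxOn_Iic (hz.differentiableAt x t ht) ?_
    filter_upwards [Icc_mem_nhdsLE ht.1] with s hs
    exact isMaxOn_iff.1 hmax (s, x) ⟨⟨hs.1, hs.2.trans ht.2⟩, Ioo_subset_Icc_self hx⟩
  have hspace : iteratedDeriv 2 (z t) x ≤ 0 := by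
    refine IsLocalMax.iteratedDeriv_two_nonpos (hz.contDiff t ht).continuous.continuousAt ?_
    filter_upwards [Icc_mem_nhds hx.1 hx.2] with y hy
    exact isMaxOn_iff.1 hmax (t, y) ⟨⟨ht.1.le, ht.2⟩, hy⟩
  rw [heatOp]
  linarith

theorem maximum_principle_rect (hz : IsHeatRegular z a b) (h₀ : ∀ x ∈ Icc (-R) R, z a x ≤ 0)
    (hbd : ∀ t ∈ Icc a b, z t (-R) ≤ 0 ∧ z t R ≤ 0)
    (hL : ∀ t ∈ Ioc a b, ∀ x ∈ Ioo (-R) R, 0 < z t x → heatOp z t x ≤ L * z t x) :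
    ∀ t ∈ Icc a b, ∀ x ∈ Icc (-R) R, z t x ≤ 0 := by
  by_contra! ⟨t₀, ht₀, x₀, hx₀, hpos⟩
  -- at a positive maximum of `e^{-(L+1)t} z`, the heat operator of `z` would exceed `L z`
  set ζ : ℝ → ℝ → ℝ := fun t x => exp (-((L + 1) * t)) * z t x with hζdef
  have hexp : ∀ t, HasDerivAt (fun τ => exp (-((L + 1) * τ))) (-(L + 1) * exp (-((L + 1) * t))) t :=
    fun t => by simpa [mul_comm] using ((hasDerivAt_id t).const_mul (L + 1)).neg.exp
  have hζ : IsHeatRegular ζ a b := hz.mul_left fun t => (hexp t).differentiableAt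
  obtain ⟨⟨t₁, x₁⟩, hmem, hmax⟩ := (isCompact_Icc.prod isCompact_Icc).exists_isMaxOn
    ⟨(t₀, x₀), ht₀, hx₀⟩ (hζ.continuousOn.mono (prod_mono le_rfl (subset_univ _)))
  have ht₁ : t₁ ∈ Icc a b := hmem.1
  have hx₁ : x₁ ∈ Icc (-R) R := hmem.2
  have hz₁ : 0 < z t₁ x₁ := by
    have : 0 < ζ t₁ x₁ :=
      (mul_pos (exp_pos _) hpos).trans_le (isMaxOn_iff.1 hmax (t₀, x₀) ⟨ht₀, hx₀⟩)
    exact pos_of_mul_pos_right this (exp_pos _).le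
  have ht₁' : t₁ ∈ Ioc a b := by
    refine ⟨ht₁.1.lt_of_ne ?_, ht₁.2⟩
    rintro rfl
    exact hz₁.not_ge (h₀ x₁ hx₁)
  have hx₁' : x₁ ∈ Ioo (-R) R := by
    refine ⟨hx₁.1.lt_of_ne ?_, hx₁.2.lt_of_ne ?_⟩ <;> rintro rfl
    exacts [hz₁.not_ge (hbd t₁ ht₁).1, hz₁.not_ge (hbd t₁ ht₁).2]
  have hζop : heatOp ζ t₁ x₁ = exp (-((L + 1) * t₁)) * (heatOp z t₁ x₁ - (L + 1) * z t₁ x₁) := by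
    rw [hζdef, heatOp_mul_left (hexp t₁) (hz.differentiableAt x₁ t₁ ht₁')]
    ring
  have hmax_op := hζ.heatOp_nonneg_of_isMaxOn ht₁' hx₁' hmax
  rw [hζop] at hmax_op
  have := nonneg_of_mul_nonneg_right hmax_op (exp_pos _)
  linarith [hL t₁ ht₁' x₁ hx₁' hz₁]

theorem comparison_rect (hz : IsHeatRegular z a b) (hw : IsHeatRegular w a b)
    (h₀ : ∀ x ∈ Icc (-R) R, z a x ≤ w a x)
    (hbd : ∀ t ∈ Icc a b, z t (-R) ≤ w t (-R) ∧ z t R ≤ w t R)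
    (hL : ∀ t ∈ Ioc a b, ∀ x ∈ Ioo (-R) R, w t x < z t x →
      heatOp z t x - heatOp w t x ≤ L * (z t x - w t x)) :
    ∀ t ∈ Icc a b, ∀ x ∈ Icc (-R) R, z t x ≤ w t x := by
  intro t ht x hx
  refine sub_nonpos.1 ((hz.sub hw).maximum_principle_rect (L := L)
    (fun x hx => sub_nonpos.2 (h₀ x hx))
    (fun t ht => ⟨sub_nonpos.2 (hbd t ht).1, sub_nonpos.2 (hbd t ht).2⟩) ?_ t ht x hx)
  intro t ht x hx hpos
  rw [hz.heatOp_sub hw ht]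
  exact hL t ht x hx (sub_pos.1 hpos)

lemma le_cosh_barrier {C : ℝ} (hz : IsHeatRegular z a b) (hC : ∀ t ∈ Icc a b, ∀ x, z t x ≤ C)
    (h₀ : ∀ x, z a x ≤ 0) (hL : ∀ t ∈ Ioc a b, ∀ x, 0 < z t x → heatOp z t x ≤ L * z t x) :
    ∀ t ∈ Icc a b, ∀ x ∈ Icc (-R) R,
      z t x ≤ max C 0 * exp ((max L 0 + 1) * (t - a)) * cosh x / cosh R := by
  set L' := max L 0
  set C' := max C 0
  set f : ℝ → ℝ := fun s => C' / cosh R * exp ((L' + 1) * (s - a))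
  have hf : ∀ s, HasDerivAt f ((L' + 1) * f s) s := fun s => by
    simpa [f, mul_comm, mul_left_comm, mul_assoc] using
      ((((hasDerivAt_id s).sub_const a).const_mul (L' + 1)).exp).const_mul (C' / cosh R)
  have hf_nonneg : ∀ s, 0 ≤ f s := fun s => by positivity
  -- `B = f s * cosh y` satisfies `(∂ₜ - ∂ₓ²)B = L' B` and `B ≥ C` on the sides `y = ±R`
  have hfR : ∀ s ∈ Icc a b, C ≤ f s * cosh R := fun s hs => by
    have : f s * cosh R = C' * exp ((L' + 1) * (s - a)) := by
      simp only [f]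
      field_simp [(cosh_pos R).ne']
    rw [this]
    exact (le_max_left C 0).trans (le_mul_of_one_le_right (le_max_right C 0)
      (one_le_exp (mul_nonneg (by positivity) (sub_nonneg.2 hs.1))))
  intro t ht x hx
  refine (hz.comparison_rect ((of_space contDiff_cosh).mul_left fun s => (hf s).differentiableAt)
    (R := R) (L := L') (fun y _ => (h₀ y).trans (mul_nonneg (hf_nonneg a) (cosh_pos y).le))
    (fun s hs => ⟨by rw [cosh_neg]; exact (hC s hs _).trans (hfR s hs),
      (hC s hs _).trans (hfR s hs)⟩) ?_ t ht x hx).trans_eq (by simp only [f]; ring)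
  intro s hs y _ hlt
  rw [heatOp_separable (hf s), iteratedDeriv_two_cosh]
  have hzpos : 0 < z s y := (mul_nonneg (hf_nonneg s) (cosh_pos y).le).trans_lt hlt
  nlinarith [hL s hs y hzpos, le_max_left L 0, le_max_right L 0]

theorem maximum_principle_strip {C : ℝ} (hz : IsHeatRegular z a b)
    (hC : ∀ t ∈ Icc a b, ∀ x, z t x ≤ C) (h₀ : ∀ x, z a x ≤ 0)
    (hL : ∀ t ∈ Ioc a b, ∀ x, 0 < z t x → heatOp z t x ≤ L * z t x) :
    ∀ t ∈ Icc a b, ∀ x, z t x ≤ 0 := fun t ht x =>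
  ge_of_tendsto (tendsto_const_nhds.div_atTop tendsto_cosh_atTop)
    ((eventually_ge_atTop |x|).mono fun _ hR => hz.le_cosh_barrier hC h₀ hL t ht x (abs_le.1 hR))

end IsHeatRegular

/-- The solution of the heat equation `∂ₜG = ∂ₓ²G` with initial datum `exp (-α x²)`. -/
noncomputable def heatGaussian (α t x : ℝ) : ℝ :=
  exp (-(α * x ^ 2) / (4 * α * t + 1)) / √(4 * α * t + 1)

section heatGaussian

variable {α t : ℝ}

lemma hasDerivAt_heatGaussian_space (x : ℝ) :
    HasDerivAt (heatGaussian α t)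
      (heatGaussian α t x * (-(2 * α * x) / (4 * α * t + 1))) x := by
  have h := (((hasDerivAt_pow 2 x).const_mul α).fun_neg.div_const (4 * α * t + 1)).exp.div_const
    √(4 * α * t + 1)
  refine h.congr_deriv ?_
  rw [heatGaussian]
  field_simp
  ring

lemma iteratedDeriv_two_heatGaussian (x : ℝ) :
    iteratedDeriv 2 (heatGaussian α t) x = heatGaussian α t x *
      (4 * α ^ 2 * x ^ 2 / (4 * α * t + 1) ^ 2 - 2 * α / (4 * α * t + 1)) := by
  have hderiv : deriv (heatGaussian α t) =
      fun y => heatGaussian α t y * (-(2 * α * y) / (4 * α * t + 1)) :=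
    funext fun y => (hasDerivAt_heatGaussian_space y).deriv
  have hlin : HasDerivAt (fun y => -(2 * α * y) / (4 * α * t + 1))
      (-(2 * α) / (4 * α * t + 1)) x := by
    simpa using ((hasDerivAt_id x).const_mul (2 * α)).neg.div_const (4 * α * t + 1)
  rw [iteratedDeriv_succ, iteratedDeriv_one, hderiv,
    ((hasDerivAt_heatGaussian_space x).fun_mul hlin).deriv]
  field_simp
  ring

lemma hasDerivAt_heatGaussian_time (hp : 0 < 4 * α * t + 1) (x : ℝ) :
    HasDerivAt (fun τ => heatGaussian α τ x) (heatGaussian α t x *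
      (4 * α ^ 2 * x ^ 2 / (4 * α * t + 1) ^ 2 - 2 * α / (4 * α * t + 1))) t := by
  have hlin : HasDerivAt (fun τ => 4 * α * τ + 1) (4 * α) t := by
    simpa using ((hasDerivAt_id t).const_mul (4 * α)).add_const 1
  have h := ((hasDerivAt_const t (-(α * x ^ 2))).div hlin hp.ne').exp.div
    (hlin.sqrt hp.ne') (sqrt_pos.2 hp).ne'
  refine h.congr_deriv ?_
  simp only [heatGaussian, Pi.div_apply]
  set s := √(4 * α * t + 1)
  have hs : s ≠ 0 := (sqrt_pos.2 hp).ne'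
  rw [show 4 * α * t + 1 = s ^ 2 from (sq_sqrt hp.le).symm]
  field_simp
  ring

lemma heatOp_heatGaussian (hp : 0 < 4 * α * t + 1) (x : ℝ) : heatOp (heatGaussian α) t x = 0 := by
  rw [heatOp, (hasDerivAt_heatGaussian_time hp x).deriv, iteratedDeriv_two_heatGaussian x,
    sub_self]

lemma isHeatRegular_heatGaussian {a b : ℝ} (hα : 0 ≤ α) (ha : 0 ≤ a) :
    IsHeatRegular (heatGaussian α) a b where
  continuousOn := by
    have hp : ∀ p ∈ Icc a b ×ˢ (univ : Set ℝ), 0 < 4 * α * p.1 + 1 := fun p hp => by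
      nlinarith [ha.trans hp.1.1]
    refine ContinuousOn.div ?_ ?_ fun p hp' => (sqrt_pos.2 (hp p hp')).ne'
    · exact ContinuousOn.rexp (ContinuousOn.div (by fun_prop) (by fun_prop)
        fun p hp' => (hp p hp').ne')
    · fun_prop
  differentiableAt x t ht :=
    (hasDerivAt_heatGaussian_time (by nlinarith [ha.trans_lt ht.1]) x).differentiableAt
  contDiff t _ := by
    unfold heatGaussian
    fun_prop

end heatGaussian

lemma heatGaussian_le_exp {α t : ℝ} (hαt : 0 ≤ α * t) (x : ℝ) :
    heatGaussian α t x ≤ exp (-(α * x ^ 2) / (4 * α * t + 1)) :=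
  div_le_self (exp_pos _).le (one_le_sqrt.2 (by linarith))

/-- Heat flow of `exp (-10 x²)`, damped at the rate `2` that bounds the decay of `v`,
shifted so as to vanish at `|x| = 1` initially and scaled below the initial bound `1/1000`. -/
noncomputable def spreadingBarrier (t x : ℝ) : ℝ :=
  exp (-2 * t) / 1000 * (heatGaussian 10 t x - exp (-10))

lemma hasDerivAt_exp_neg_two_mul_div (t : ℝ) :
    HasDerivAt (fun τ => exp (-2 * τ) / 1000) (-2 * (exp (-2 * t) / 1000)) t := by
  refine (((hasDerivAt_id t).const_mul (-2)).exp.div_const 1000).congr_deriv ?_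
  simp only [id, mul_one]
  ring

lemma isHeatRegular_spreadingBarrier {b : ℝ} : IsHeatRegular spreadingBarrier 0 b :=
  ((isHeatRegular_heatGaussian (by norm_num) le_rfl).sub (IsHeatRegular.of_time
    (differentiable_const (exp (-10))))).mul_left
    fun t => (hasDerivAt_exp_neg_two_mul_div t).differentiableAt

lemma heatOp_spreadingBarrier {t : ℝ} (ht : 0 < t) (x : ℝ) :
    heatOp spreadingBarrier t x = -2 * spreadingBarrier t x := by
  have hG : IsHeatRegular (heatGaussian 10) 0 t := isHeatRegular_heatGaussian (by norm_num) le_rfl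
  have hk : IsHeatRegular (fun _ _ => exp (-10)) 0 t :=
    IsHeatRegular.of_time (differentiable_const _)
  have hshift : heatOp (fun t x => heatGaussian 10 t x - exp (-10)) t x = 0 := by
    rw [hG.heatOp_sub hk ⟨ht, le_rfl⟩, heatOp_heatGaussian (by positivity), heatOp_of_time]
    simp
  change heatOp (fun t x => exp (-2 * t) / 1000 * (heatGaussian 10 t x - exp (-10))) t x = _
  rw [heatOp_mul_left (z := fun t x => heatGaussian 10 t x - exp (-10))
    (hasDerivAt_exp_neg_two_mul_div t)
    ((hG.sub hk).differentiableAt x t ⟨ht, le_rfl⟩), hshift, spreadingBarrier]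
  ring

-- `e^{-2t} ≥ e^{-16}` and `heatGaussian 10 t x ≥ e^{-3}/19` on `[6, 8] × [-8, 8]`
noncomputable def spreadLevel : ℝ := exp (-16) * (exp (-3) / 19 - exp (-10)) / 1000

lemma spreadLevel_pos : 0 < spreadLevel := by
  have h7 : 19 < exp 7 := by
    have : exp 7 = exp (7 / 2) * exp (7 / 2) := by rw [← exp_add]; norm_num
    nlinarith [add_one_le_exp (7 / 2 : ℝ)]
  have : exp (-3) = exp 7 * exp (-10) := by rw [← exp_add]; norm_num
  unfold spreadLevel
  have := exp_pos (-10)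
  have := exp_pos (-16)
  apply div_pos (mul_pos (exp_pos _) _) (by norm_num)
  nlinarith

lemma spreadLevel_lt : spreadLevel < 1 / 10 := by
  have := exp_le_one_iff.2 (show (-16 : ℝ) ≤ 0 by norm_num)
  have := exp_le_one_iff.2 (show (-3 : ℝ) ≤ 0 by norm_num)
  have := exp_pos (-10)
  have := exp_pos (-16)
  unfold spreadLevel
  nlinarith

lemma spreadLevel_le_spreadingBarrier {t x : ℝ} (ht : t ∈ Icc (6 : ℝ) 8) (hx : x ∈ Icc (-8 : ℝ) 8) :
    spreadLevel ≤ spreadingBarrier t x := by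
  have hp : 0 < 4 * 10 * t + 1 := by linarith [ht.1]
  have hG : exp (-3) / 19 ≤ heatGaussian 10 t x := by
    apply div_le_div₀ (exp_pos _).le (exp_le_exp.2 ?_) (sqrt_pos.2 hp) ?_
    · rw [le_div_iff₀ hp]
      nlinarith [hx.1, hx.2, ht.1]
    · rw [show (19 : ℝ) = √(19 ^ 2) by rw [sqrt_sq (by norm_num)]]
      exact sqrt_le_sqrt (by nlinarith [ht.2])
  have hdamp : exp (-16) ≤ exp (-2 * t) := exp_le_exp.2 (by linarith [ht.2])
  have hgap : 0 ≤ exp (-3) / 19 - exp (-10) := by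
    have := spreadLevel_pos
    unfold spreadLevel at this
    have := exp_pos (-16)
    nlinarith
  unfold spreadLevel spreadingBarrier
  rw [div_mul_eq_mul_div, div_le_div_iff_of_pos_right (by norm_num)]
  exact mul_le_mul hdamp (by linarith) hgap (exp_pos _).le

lemma cos_mul_nonneg_of_mem_Icc {k x R : ℝ} (hk : 0 ≤ k) (hkR : k * R = π / 2)
    (hx : x ∈ Icc (-R) R) :
    0 ≤ cos (k * x) :=
  cos_nonneg_of_mem_Icc ⟨by nlinarith [hx.1], by nlinarith [hx.2]⟩

lemma one_sub_sq_div_two_le_cos_mul {k x R : ℝ} (hx : x ∈ Icc (-R) R) :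
    1 - (k * R) ^ 2 / 2 ≤ cos (k * x) := by
  have : (k * x) ^ 2 ≤ (k * R) ^ 2 := by
    rw [mul_pow, mul_pow]
    exact mul_le_mul_of_nonneg_left (sq_le_sq' hx.1 hx.2) (sq_nonneg k)
  linarith [one_sub_sq_div_two_le_cos (x := k * x)]

namespace IsBddSol1

variable {c : ℝ} {u v : ℝ → ℝ → ℝ}

lemma isHeatRegular_u (hsol : IsBddSol1 c u v) {a b : ℝ} (ha : 0 ≤ a) : IsHeatRegular u a b where
  continuousOn := hsol.cont_u.mono (prod_mono (fun _ ht => ha.trans ht.1) le_rfl)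
  differentiableAt x _ ht := ((hsol.t_reg_u x).differentiableOn one_ne_zero).differentiableAt
    (Ioi_mem_nhds (ha.trans_lt ht.1))
  contDiff t ht := hsol.x_reg_u t (ha.trans_lt ht.1)

lemma isHeatRegular_v (hsol : IsBddSol1 c u v) {a b : ℝ} (ha : 0 ≤ a) : IsHeatRegular v a b where
  continuousOn := hsol.cont_v.mono (prod_mono (fun _ ht => ha.trans ht.1) le_rfl)
  differentiableAt x _ ht := ((hsol.t_reg_v x).differentiableOn one_ne_zero).differentiableAt
    (Ioi_mem_nhds (ha.trans_lt ht.1))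
  contDiff t ht := hsol.x_reg_v t (ha.trans_lt ht.1)

lemma heatOp_u (hsol : IsBddSol1 c u v) {t : ℝ} (ht : 0 < t) (x : ℝ) :
    heatOp u t x = (2 * c * (1 - u t x) + 1) * v t x - u t x := by
  rw [heatOp, hsol.eq_u t ht x]
  ring

lemma heatOp_v (hsol : IsBddSol1 c u v) {t : ℝ} (ht : 0 < t) (x : ℝ) :
    heatOp v t x = (c * (u t x - v t x) - 2) * v t x := by
  rw [heatOp, hsol.eq_v t ht x]
  ring

lemma spreadingBarrier_le_v (hsol : IsBddSol1 c u v) (hc : 0 ≤ c)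
    (hℛ : ∀ t, 0 ≤ t → ∀ x, (u t x, v t x) ∈ calR) (h₀ : ∀ x ∈ Icc (-1 : ℝ) 1, 1 / 1000 < v 0 x) :
    ∀ t ∈ Icc (0 : ℝ) 8, ∀ x ∈ Icc (-30 : ℝ) 30, spreadingBarrier t x ≤ v t x := by
  have hG_edge : ∀ t ∈ Icc (0 : ℝ) 8, heatGaussian 10 t 30 ≤ exp (-10) := fun t ht =>
    (heatGaussian_le_exp (by linarith [ht.1]) 30).trans <| exp_le_exp.2 <| by
      rw [div_le_iff₀ (by linarith [ht.1])]
      nlinarith [ht.2]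
  refine isHeatRegular_spreadingBarrier.comparison_rect (hsol.isHeatRegular_v le_rfl) (L := 0)
    (fun x _ => ?_) (fun t ht => ⟨?_, ?_⟩) fun t ht x _ _ => ?_
  · have hv := (hℛ 0 le_rfl x).1
    simp only [spreadingBarrier, heatGaussian, mul_zero, zero_add, sqrt_one, div_one, exp_zero]
    by_cases hx : x ∈ Icc (-1 : ℝ) 1
    · have := h₀ x hx
      have : exp (-(10 * x ^ 2)) ≤ 1 := exp_le_one_iff.2 (by nlinarith)
      linarith [exp_pos (-10)]
    · have : exp (-(10 * x ^ 2)) ≤ exp (-10) := by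
        rw [exp_le_exp]
        rw [mem_Icc, not_and_or, not_le, not_le] at hx
        rcases hx with hx | hx <;> nlinarith
      nlinarith
  · have := (hℛ t ht.1 (-30)).1
    have : heatGaussian 10 t (-30) ≤ exp (-10) := by simpa [heatGaussian] using hG_edge t ht
    simp only [spreadingBarrier]
    nlinarith [exp_pos (-2 * t)]
  · have := (hℛ t ht.1 30).1
    have := hG_edge t ht
    simp only [spreadingBarrier]
    nlinarith [exp_pos (-2 * t)]
  · have hv := (hℛ t ht.1.le x).1
    have hvu := (hℛ t ht.1.le x).2.1
    rw [heatOp_spreadingBarrier ht.1, hsol.heatOp_v ht.1]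
    nlinarith [mul_nonneg (mul_nonneg hc (sub_nonneg.2 hvu)) hv]

lemma cosineBarrier_le_u (hsol : IsBddSol1 c u v) (hℛ : ∀ t, 0 ≤ t → ∀ x, (u t x, v t x) ∈ calR)
    {a b ρ : ℝ} (ha : 0 ≤ a) (hρ : 0 < ρ) (hcρ : 3 / 2 ≤ c * ρ)
    (hv : ∀ t ∈ Icc a b, ∀ x ∈ Icc (-8 : ℝ) 8, ρ ≤ v t x) :
    ∀ t ∈ Icc a b, ∀ x ∈ Icc (-8 : ℝ) 8, (1 - exp (-(t - a))) / 2 * cos (π / 16 * x) ≤ u t x := by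
  set η : ℝ → ℝ := fun t => (1 - exp (-(t - a))) / 2
  have hη : ∀ t, HasDerivAt η (exp (-(t - a)) / 2) t := fun t =>
    ((((hasDerivAt_id t).sub_const a).neg.exp.const_sub 1).div_const 2).congr_deriv (by simp)
  have hηa : η a = 0 := by simp [η]
  have hη_le : ∀ t, η t ≤ 1 / 2 := fun t => by simp only [η]; linarith [exp_pos (-(t - a))]
  have hu_nonneg : ∀ t, 0 ≤ t → ∀ x, 0 ≤ u t x := fun t ht x =>
    (hℛ t ht x).1.trans (hℛ t ht x).2.1
  suffices ∀ t ∈ Icc a b, ∀ x ∈ Icc (-8 : ℝ) 8, η t * cos (π / 16 * x) ≤ u t x from this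
  refine ((IsHeatRegular.of_space (contDiff_cos.comp (contDiff_const.mul contDiff_id))).mul_left
    fun t => (hη t).differentiableAt).comparison_rect (hsol.isHeatRegular_u ha) (L := 0)
    (fun x _ => ?_) (fun t ht => ⟨?_, ?_⟩) fun t ht x hx hlt => ?_
  · simpa [hηa] using hu_nonneg a ha x
  · simpa [show π / 16 * -8 = -(π / 2) by ring] using hu_nonneg t (ha.trans ht.1) (-8)
  · simpa [show π / 16 * 8 = π / 2 by ring] using hu_nonneg t (ha.trans ht.1) 8
  · have ht₀ : 0 < t := ha.trans_lt ht.1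
    have hv_nonneg : 0 ≤ v t x := (hℛ t ht₀.le x).1
    have hvρ := hv t ⟨ht.1.le, ht.2⟩ x (Ioo_subset_Icc_self hx)
    have hcos := cos_mul_nonneg_of_mem_Icc (k := π / 16) (R := 8) (by positivity) (by ring)
      (Ioo_subset_Icc_self hx)
    have hcos_le := cos_le_one (π / 16 * x)
    have hk : (π / 16) ^ 2 ≤ 1 / 16 := by nlinarith [pi_pos, pi_le_four]
    have hηt : 0 ≤ η t := by
      simp only [η]
      linarith [exp_le_one_iff.2 (show -(t - a) ≤ 0 by linarith [ht.1])]
    have hexp : exp (-(t - a)) ≤ 1 := exp_le_one_iff.2 (by linarith [ht.1])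
    -- the barrier stays below `1/2`, where the reaction `2c(1-u)v` of `u` is at least `cρ`
    have hu_half : u t x ≤ 1 / 2 := by nlinarith [hη_le t]
    have hbarrier : heatOp (fun t x => η t * cos (π / 16 * x)) t x ≤ 1 := by
      rw [heatOp_separable (hη t), iteratedDeriv_two_cos_mul]
      nlinarith [mul_le_mul hk (mul_le_mul (hη_le t) hcos_le hcos (by norm_num))
        (mul_nonneg hηt hcos) (by norm_num)]
    have hreaction : 1 ≤ heatOp u t x := by
      rw [hsol.heatOp_u ht₀]
      nlinarith [mul_le_mul_of_nonneg_left hvρ (show 0 ≤ 2 * c * (1 - u t x) by nlinarith)]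
    linarith

lemma one_eighth_le_u (hsol : IsBddSol1 c u v) (hℛ : ∀ t, 0 ≤ t → ∀ x, (u t x, v t x) ∈ calR)
    {a b ρ : ℝ} (ha : 0 ≤ a) (hρ : 0 < ρ) (hcρ : 3 / 2 ≤ c * ρ)
    (hv : ∀ t ∈ Icc a b, ∀ x ∈ Icc (-8 : ℝ) 8, ρ ≤ v t x) :
    ∀ t ∈ Icc (a + 1) b, ∀ x ∈ Icc (-4 : ℝ) 4, 1 / 8 ≤ u t x := by
  intro t ht x hx
  have hbarrier := hsol.cosineBarrier_le_u hℛ ha hρ hcρ hv t ⟨by linarith [ht.1], ht.2⟩ x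
    ⟨by linarith [hx.1], by linarith [hx.2]⟩
  have hexp : exp (-(t - a)) ≤ 1 / 2 := by
    calc exp (-(t - a)) ≤ exp (-1) := exp_le_exp.2 (by linarith [ht.1])
      _ ≤ 1 / 2 := by
        rw [exp_neg, inv_le_comm₀ (exp_pos 1) (by norm_num)]
        linarith [add_one_le_exp (1 : ℝ)]
  have hcos : 1 / 2 ≤ cos (π / 16 * x) :=
    le_trans (by nlinarith [pi_pos, pi_le_four]) (one_sub_sq_div_two_le_cos_mul hx)
  nlinarith

lemma growthBarrier_le_v (hsol : IsBddSol1 c u v) (hℛ : ∀ t, 0 ≤ t → ∀ x, (u t x, v t x) ∈ calR)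
    (hc : 180 ≤ c) {a T ρ : ℝ} (ha : 0 ≤ a) (hρ : 0 ≤ ρ) (hT : ρ * exp (c / 80 * (T - a)) ≤ 1 / 10)
    (hu : ∀ t ∈ Icc a T, ∀ x ∈ Icc (-4 : ℝ) 4, 1 / 8 ≤ u t x)
    (hv : ∀ x ∈ Icc (-4 : ℝ) 4, ρ ≤ v a x) :
    ∀ t ∈ Icc a T, ∀ x ∈ Icc (-4 : ℝ) 4, ρ * exp (c / 80 * (t - a)) * cos (π / 8 * x) ≤ v t x := by
  set m : ℝ → ℝ := fun t => ρ * exp (c / 80 * (t - a))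
  have hm : ∀ t, HasDerivAt m (c / 80 * m t) t := fun t =>
    ((((hasDerivAt_id t).sub_const a).const_mul (c / 80)).exp.const_mul ρ).congr_deriv
      (by simp only [m, id]; ring)
  have hv_nonneg : ∀ t, 0 ≤ t → ∀ x, 0 ≤ v t x := fun t ht x => (hℛ t ht x).1
  suffices ∀ t ∈ Icc a T, ∀ x ∈ Icc (-4 : ℝ) 4, m t * cos (π / 8 * x) ≤ v t x from this
  refine ((IsHeatRegular.of_space (contDiff_cos.comp (contDiff_const.mul contDiff_id))).mul_left
    fun t => (hm t).differentiableAt).comparison_rect (hsol.isHeatRegular_v ha) (L := c / 8)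
    (fun x hx => ?_) (fun t ht => ⟨?_, ?_⟩) fun t ht x hx hlt => ?_
  · simpa [m] using (mul_le_of_le_one_right hρ (cos_le_one _)).trans (hv x hx)
  · simpa [show π / 8 * -4 = -(π / 2) by ring] using hv_nonneg t (ha.trans ht.1) (-4)
  · simpa [show π / 8 * 4 = π / 2 by ring] using hv_nonneg t (ha.trans ht.1) 4
  · have ht₀ : 0 < t := ha.trans_lt ht.1
    have hv₀ : 0 ≤ v t x := (hℛ t ht₀.le x).1
    have hu₈ := hu t ⟨ht.1.le, ht.2⟩ x (Ioo_subset_Icc_self hx)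
    have hcos := cos_mul_nonneg_of_mem_Icc (k := π / 8) (R := 4) (by positivity) (by ring)
      (Ioo_subset_Icc_self hx)
    have hcos_le := cos_le_one (π / 8 * x)
    have hk : (π / 8) ^ 2 ≤ 1 / 4 := by nlinarith [pi_pos, pi_le_four]
    have hmt : 0 ≤ m t := by positivity
    have hm_le : m t ≤ 1 / 10 :=
      (mul_le_mul_of_nonneg_left (exp_le_exp.2 (by nlinarith [ht.2])) hρ).trans hT
    set φ := m t * cos (π / 8 * x)
    have hφ : φ ≤ 1 / 10 := (mul_le_of_le_one_right hmt hcos_le).trans hm_le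
    have hφop : heatOp (fun t x => m t * cos (π / 8 * x)) t x = (c / 80 + (π / 8) ^ 2) * φ := by
      rw [heatOp_separable (hm t), iteratedDeriv_two_cos_mul]
      ring
    -- `v < φ ≤ 1/10` and `u ≥ 1/8` leave the reaction `c(u - v)v` a margin of `c/80` over the
    -- barrier's growth rate
    have hφ₀ : 0 ≤ φ := hv₀.trans hlt.le
    have hc₀ : 0 ≤ c := by linarith
    rw [hφop, hsol.heatOp_v ht₀]
    nlinarith [mul_le_mul_of_nonneg_right hk hφ₀,
      mul_nonneg (mul_nonneg hc₀ (sub_nonneg.2 hu₈)) hv₀,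
      mul_le_mul_of_nonneg_left (mul_le_mul hlt.le (hlt.le.trans hφ) hv₀ hφ₀) hc₀,
      mul_nonneg (sub_nonneg.2 hc) hφ₀]

/-- Since `u ≤ 1`, `v` is a subsolution of `∂ₜv = ∂ₓ²v + (c(1 - v) - 2)v`, whose solution with
initial value `1` relaxes to the equilibrium `1 - 2/c`. -/
lemma v_le_relaxation (hsol : IsBddSol1 c u v) (hℛ : ∀ t, 0 ≤ t → ∀ x, (u t x, v t x) ∈ calR)
    (hc : 3 ≤ c) : ∀ t, 0 ≤ t → ∀ x, v t x ≤ 1 - 2 / c * (1 - exp (-t)) := by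
  intro t ht x
  set q := 2 / c
  have hcq : c * q = 2 := by simp only [q]; field_simp
  set W : ℝ → ℝ := fun s => 1 - q * (1 - exp (-s))
  have hW : ∀ s, HasDerivAt W (-(q * exp (-s))) s := fun s =>
    (((hasDerivAt_neg s).exp.const_sub 1).const_mul q).const_sub 1 |>.congr_deriv (by ring)
  have hq : q ≤ 2 / 3 := div_le_div_of_nonneg_left (by norm_num) (by norm_num) hc
  have hW_ge : ∀ s, 0 ≤ s → 1 - q ≤ W s := fun s hs => by
    simp only [W]
    nlinarith [exp_pos (-s), div_pos two_pos (show 0 < c by linarith)]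
  suffices v t x - W t ≤ 0 by simpa [W] using this
  refine ((hsol.isHeatRegular_v le_rfl).sub (IsHeatRegular.of_time fun s => (hW s).differentiableAt)
    ).maximum_principle_strip (C := 1) (L := c) (fun s hs y => ?_) (fun y => ?_)
    (fun s hs y hpos => ?_) t ⟨ht, le_rfl⟩ x
  · linarith [(hℛ s hs.1 y).2.1, (hℛ s hs.1 y).2.2, hW_ge s hs.1]
  · simpa [W] using (hℛ 0 le_rfl y).2.1.trans (hℛ 0 le_rfl y).2.2
  · have hs₀ : 0 < s := hs.1
    obtain ⟨hv₀, -, hu₁⟩ : 0 ≤ v s y ∧ v s y ≤ u s y ∧ u s y ≤ 1 := hℛ s hs₀.le y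
    rw [((hsol.isHeatRegular_v le_rfl).heatOp_sub (IsHeatRegular.of_time fun s =>
      (hW s).differentiableAt) hs), heatOp_of_time, (hW s).deriv, hsol.heatOp_v hs₀]
    have hWs := hW_ge s hs₀.le
    have hE := exp_pos (-s)
    have hc₀ : 0 ≤ c := by linarith
    nlinarith [mul_nonneg (mul_nonneg hc₀ (sub_nonneg.2 hu₁)) hv₀,
      mul_nonneg hpos.le (show 0 ≤ c * (v s y + W s) + 2 by nlinarith),
      mul_nonneg hE.le (show 0 ≤ c * W s - 1 by nlinarith)]

lemma hundredth_lt_v (hsol : IsBddSol1 c u v) (hℛ : ∀ t, 0 ≤ t → ∀ x, (u t x, v t x) ∈ calR)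
    (hc : 180 ≤ c) (hcr : 3 / 2 ≤ c * spreadLevel) {τ : ℝ} (hτ₀ : 0 ≤ τ) (hτ₁ : τ ≤ 1)
    (hτ : spreadLevel * exp (c / 80 * τ) = 1 / 10) (h₀ : ∀ x ∈ Icc (-1 : ℝ) 1, 1 / 1000 < v 0 x) :
    ∀ x ∈ Icc (-3 : ℝ) 3, 1 / 100 < v (7 + τ) x := by
  intro x hx
  have hv_spread : ∀ t ∈ Icc (6 : ℝ) 8, ∀ x ∈ Icc (-8 : ℝ) 8, spreadLevel ≤ v t x :=
    fun t ht x hx => (spreadLevel_le_spreadingBarrier ht hx).trans <|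
      hsol.spreadingBarrier_le_v (by linarith) hℛ h₀ t ⟨by linarith [ht.1], ht.2⟩ x
        ⟨by linarith [hx.1], by linarith [hx.2]⟩
  have hu := hsol.one_eighth_le_u hℛ (a := 6) (b := 8) (by norm_num) spreadLevel_pos
    hcr hv_spread
  have hv_grow := hsol.growthBarrier_le_v hℛ hc (a := 7) (T := 7 + τ) (by norm_num)
    spreadLevel_pos.le (by rw [add_sub_cancel_left, hτ])
    (fun t ht x hx => hu t ⟨by linarith [ht.1], by linarith [ht.2]⟩ x hx)
    (fun x hx => hv_spread 7 (by norm_num) x ⟨by linarith [hx.1], by linarith [hx.2]⟩)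
    (7 + τ) ⟨by linarith, le_rfl⟩ x ⟨by linarith [hx.1], by linarith [hx.2]⟩
  rw [add_sub_cancel_left, hτ] at hv_grow
  have hcos : 3 / 10 ≤ cos (π / 8 * x) :=
    le_trans (by nlinarith [pi_pos, pi_lt_d2]) (one_sub_sq_div_two_le_cos_mul hx)
  linarith

lemma v_lt_one_sub_inv (hsol : IsBddSol1 c u v) (hℛ : ∀ t, 0 ≤ t → ∀ x, (u t x, v t x) ∈ calR)
    (hc : 3 ≤ c) {t : ℝ} (ht : 1 ≤ t) (x : ℝ) : v t x < 1 - 1 / c := by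
  have hdecay : exp (-t) < 1 / 2 := by
    rw [exp_neg, inv_lt_comm₀ (exp_pos _) (by norm_num)]
    linarith [add_one_lt_exp (show t ≠ 0 by linarith), show (1 / 2 : ℝ)⁻¹ = 2 by norm_num]
  calc v t x ≤ 1 - 2 / c * (1 - exp (-t)) := hsol.v_le_relaxation hℛ hc t (by linarith) x
    _ < 1 - 1 / c := by
      rw [sub_lt_sub_iff_left, div_mul_eq_mul_div, div_lt_div_iff_of_pos_right (by linarith)]
      linarith

end IsBddSol1

lemma exists_mul_exp_eq {r s κ : ℝ} (hr : 0 < r) (hrs : r < s) (hκ : log (s / r) ≤ κ) :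
    ∃ τ ∈ Ioc (0 : ℝ) 1, r * exp (κ * τ) = s := by
  have hlog : 0 < log (s / r) := log_pos ((one_lt_div hr).2 hrs)
  have hκ₀ : 0 < κ := hlog.trans_le hκ
  refine ⟨log (s / r) / κ, ⟨div_pos hlog hκ₀, (div_le_one hκ₀).2 hκ⟩, ?_⟩
  rw [mul_div_cancel₀ _ hκ₀.ne', exp_log (div_pos (hr.trans hrs) hr)]
  field_simp

/-- Condition (*): for all sufficiently large `c` there exist
`0 < D₁ < d₁ < d₂ < D₂ < 1`, `M > 0` and `T > 0` such that every `ℛ`-valued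
bounded classical solution with `v(0,x) ∈ (D₁,D₂)` on `[−M,M]` satisfies
`v(T,x) ∈ (d₁,d₂)` on `[−3M,3M]`. -/
theorem stmt14 :
    ∃ c₀ : ℝ, ∀ c : ℝ, c₀ ≤ c →
      ∃ D₁ d₁ d₂ D₂ M T : ℝ,
        0 < D₁ ∧ D₁ < d₁ ∧ d₁ < d₂ ∧ d₂ < D₂ ∧ D₂ < 1 ∧ 0 < M ∧ 0 < T ∧
        ∀ u v : ℝ → ℝ → ℝ, IsBddSol1 c u v →
          (∀ t, 0 ≤ t → ∀ x, (u t x, v t x) ∈ calR) →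
          (∀ x ∈ Icc (-M) M, v 0 x ∈ Ioo D₁ D₂) →
          ∀ x ∈ Icc (-(3 * M)) (3 * M), v T x ∈ Ioo d₁ d₂ := by
  set r := spreadLevel
  have hr : 0 < r := spreadLevel_pos
  refine ⟨180 + 2 / r + 80 * log (1 / 10 / r), fun c hc => ?_⟩
  have hlog : 0 < log (1 / 10 / r) := log_pos ((one_lt_div hr).2 spreadLevel_lt)
  have hc180 : 180 ≤ c := by linarith [div_pos two_pos hr]
  have hcr : 3 / 2 ≤ c * r := by
    have : 2 / r ≤ c := by linarith
    rw [div_le_iff₀ hr] at this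
    linarith
  obtain ⟨τ, ⟨hτ₀, hτ₁⟩, hτ⟩ := exists_mul_exp_eq (κ := c / 80) hr spreadLevel_lt
    (by linarith [div_pos two_pos hr])
  have hc_inv : 1 / (2 * c) < 1 / c := one_div_lt_one_div_of_lt (by positivity) (by linarith)
  refine ⟨1 / 1000, 1 / 100, 1 - 1 / c, 1 - 1 / (2 * c), 1, 7 + τ, by norm_num, by norm_num,
    ?_, by linarith, by linarith [one_div_pos.2 (by positivity : 0 < 2 * c)], one_pos,
    by linarith, fun u v hsol hℛ h₀ x hx => ⟨?_, ?_⟩⟩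
  · linarith [one_div_le_one_div_of_le (by norm_num) hc180]
  · exact hsol.hundredth_lt_v hℛ hc180 hcr hτ₀.le hτ₁ hτ (fun x hx => (h₀ x (by simpa using hx)).1)
      x (by simpa using hx)
  · exact hsol.v_lt_one_sub_inv hℛ (by linarith) (by linarith) x
end
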